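/- arXiv:2211.06070 — 7 statements merged into one kernel-verified Lean document; each statement's English description precedes it below -/
import Mathlib

section
/- Let T > 0 and λ > 0. Let h : ℝ × ℝ → ℝ be continuous, T-periodic in the first variable, and satisfy (h0) and (h1). Let a : ℝ → ℝ be a locally integrable T-periodic function satisfying (a*). Let g : [0,+∞) → [0,+∞) be continuous and satisfy (g*). Assume that for every constant K > 0 there exist ε > 0 and β > 0 such that h(t, K g(s)) ≤ β s for all t ∈ ℝ and all s ∈ [0,ε). Then every non-trivial T-periodic solution (u,v) of the extended system u' = h(t,v), v' = -f(t,u), where f(t,s) = λ a(t) g(s) for s ≥ 0 and f(t,s) = -s for s < 0, satisfies u(t) > 0 for all t ∈ ℝ. -/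
/-!
Where `u < 0` the system reads `v' = u`, so at a negative minimum of `u` (where `u' = 0` forces
`v = 0`) the function `v` turns negative, and `u' = h(t, v) < 0` pushes `u` below its minimum.
Hence `u ≥ 0`. A zero of `u` is then a minimum, so `v` vanishes there as well, and the smallness
condition `h(t, K g(s)) ≤ β s` makes the maximum `M` of `u` on a short interval `[c, c + δ]`
starting at such a zero satisfy `M ≤ β δ M ≤ M / 2`. Zeros of `u` thus spread to the right, and by
periodicity over the whole line, which makes the solution trivial.
-/

open MeasureTheory Set Filter

noncomputable section

/-- `(u, v)` is a `T`-periodic solution of the planar system `u' = F t (v t)`,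
`v' = G t (u t)`: both components are continuous, `T`-periodic, and are primitives
(in the sense of the integral form, equivalent to absolute continuity plus the
differential equations holding almost everywhere) of the right-hand sides. -/
def IsPeriodicSol (T : ℝ) (F G : ℝ → ℝ → ℝ) (u v : ℝ → ℝ) : Prop :=
  Continuous u ∧ Continuous v ∧
  Function.Periodic u T ∧ Function.Periodic v T ∧
  (∀ t₁ t₂ : ℝ, IntervalIntegrable (fun s => F s (v s)) volume t₁ t₂) ∧
  (∀ t₁ t₂ : ℝ, IntervalIntegrable (fun s => G s (u s)) volume t₁ t₂) ∧
  (∀ t : ℝ, u t = u 0 + ∫ s in (0:ℝ)..t, F s (v s)) ∧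
  (∀ t : ℝ, v t = v 0 + ∫ s in (0:ℝ)..t, G s (u s))

/-- Condition (a*): there are `N + 1 ≥ 1` pairwise disjoint closed intervals
`[σ n, τ n]` contained in a period, on which `a > 0` a.e., while `a ≤ 0` a.e.
on the rest of the period. -/
def SignChanging (T : ℝ) (a : ℝ → ℝ) (N : ℕ) (σ τ : Fin (N + 1) → ℝ) : Prop :=
  (∀ n, σ n < τ n) ∧
  (∀ m n : Fin (N + 1), m < n → τ m < σ n) ∧
  (∀ n, τ n < σ 0 + T) ∧
  (∀ n, ∀ᵐ t ∂volume, t ∈ Set.Icc (σ n) (τ n) → 0 < a t) ∧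
  (∀ᵐ t ∂volume, t ∈ Set.Ico (σ 0) (σ 0 + T) \ (⋃ n, Set.Icc (σ n) (τ n)) → a t ≤ 0)

open Topology

theorem sub_eq_intervalIntegral_of_eq_add {φ w : ℝ → ℝ}
    (hφ : ∀ t₁ t₂ : ℝ, IntervalIntegrable φ volume t₁ t₂)
    (hw : ∀ t, w t = w 0 + ∫ s in (0:ℝ)..t, φ s) (t₁ t₂ : ℝ) :
    w t₂ - w t₁ = ∫ s in t₁..t₂, φ s := by
  rw [hw t₁, hw t₂, ← intervalIntegral.integral_interval_sub_left (hφ 0 t₂) (hφ 0 t₁)]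
  ring

theorem Function.Periodic.eq_zero_of_forall_eventually_eq_zero {u : ℝ → ℝ} {T t₀ : ℝ}
    (hper : Function.Periodic u T) (hT : 0 < T) (hu : Continuous u)
    (hloc : ∀ c, u c = 0 → ∀ᶠ t in 𝓝[>] c, u t = 0) (ht₀ : u t₀ = 0) (t : ℝ) : u t = 0 := by
  have hIcc : Icc t₀ (t₀ + T) ⊆ u ⁻¹' {0} :=
    ((isClosed_singleton.preimage hu).inter isClosed_Icc).Icc_subset_of_forall_mem_nhdsWithin
      ht₀ fun c hc => hloc c hc.1
  obtain ⟨y, hy, hty⟩ := hper.exists_mem_Ico hT t t₀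
  exact hty.trans (hIcc (Ico_subset_Icc_self hy))

namespace IsPeriodicSol

variable {T : ℝ} {F G : ℝ → ℝ → ℝ} {u v : ℝ → ℝ}

theorem fst_sub (hs : IsPeriodicSol T F G u v) (t₁ t₂ : ℝ) :
    u t₂ - u t₁ = ∫ s in t₁..t₂, F s (v s) :=
  sub_eq_intervalIntegral_of_eq_add hs.2.2.2.2.1 hs.2.2.2.2.2.2.1 t₁ t₂

theorem snd_sub (hs : IsPeriodicSol T F G u v) (t₁ t₂ : ℝ) :
    v t₂ - v t₁ = ∫ s in t₁..t₂, G s (u s) :=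
  sub_eq_intervalIntegral_of_eq_add hs.2.2.2.2.2.1 hs.2.2.2.2.2.2.2 t₁ t₂

theorem hasDerivAt_fst (hs : IsPeriodicSol T F G u v) (hF : Continuous (Function.uncurry F))
    (t : ℝ) : HasDerivAt u (F t (v t)) t := by
  have hφ : Continuous fun s => F s (v s) := hF.comp (continuous_id.prodMk hs.2.1)
  rw [show u = fun t => u 0 + ∫ s in (0:ℝ)..t, F s (v s) from funext hs.2.2.2.2.2.2.1]
  exact (hφ.integral_hasStrictDerivAt 0 t).hasDerivAt.const_add _

theorem snd_eq_zero_of_isLocalMin (hs : IsPeriodicSol T F G u v)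
    (hF : Continuous (Function.uncurry F)) (hF0 : ∀ t, F t 0 = 0)
    (hF1 : ∀ t, Function.Injective (F t)) {t : ℝ} (hmin : IsLocalMin u t) : v t = 0 :=
  hF1 t ((hmin.hasDerivAt_eq_zero (hs.hasDerivAt_fst hF t)).trans (hF0 t).symm)

theorem fst_nonneg (hs : IsPeriodicSol T F G u v) (hT : 0 < T)
    (hF : Continuous (Function.uncurry F)) (hF0 : ∀ t, F t 0 = 0)
    (hF1 : ∀ t, StrictMono (F t)) (hG : ∀ t x, x < 0 → G t x = x) (t : ℝ) : 0 ≤ u t := by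
  obtain ⟨_, ⟨t₁, rfl⟩, hmin⟩ :=
    (hs.2.2.1.compact_of_continuous hT.ne' hs.1).exists_isLeast (range_nonempty u)
  have hle : ∀ s, u t₁ ≤ u s := fun s => hmin ⟨s, rfl⟩
  refine (not_lt.1 fun hneg => ?_).trans (hle t)
  have hv : v t₁ = 0 := hs.snd_eq_zero_of_isLocalMin hF hF0 (fun t => (hF1 t).injective)
    (Eventually.of_forall hle)
  obtain ⟨d, htd, hu⟩ := (nhdsGT_basis t₁).eventually_iff.1
    (eventually_nhdsWithin_of_eventually_nhds (hs.1.continuousAt.eventually (gt_mem_nhds hneg)))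
  have hvneg : ∀ s ∈ Ioo t₁ d, v s < 0 := by
    intro s hs'
    have hpos : 0 < ∫ r in t₁..s, -G r (u r) :=
      intervalIntegral.intervalIntegral_pos_of_pos_on (hs.2.2.2.2.2.1 t₁ s).neg
        (fun r hr => by
          have hur := hu ⟨hr.1, hr.2.trans hs'.2⟩
          simp only [hG r _ hur]
          linarith)
        hs'.1
    rw [intervalIntegral.integral_neg, ← hs.snd_sub, hv] at hpos
    linarith
  have hpos : 0 < ∫ r in t₁..d, -F r (v r) :=
    intervalIntegral.intervalIntegral_pos_of_pos_on (hs.2.2.2.2.1 t₁ d).neg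
      (fun r hr => neg_pos.2 ((hF1 r (hvneg r hr)).trans_eq (hF0 r))) htd
  rw [intervalIntegral.integral_neg, ← hs.fst_sub] at hpos
  linarith [hle d]

theorem snd_sub_le_mul_integral (hs : IsPeriodicSol T F G u v) {ℓ g : ℝ → ℝ}
    (hℓ : ∀ t₁ t₂, IntervalIntegrable ℓ volume t₁ t₂) (hℓ0 : ∀ t, 0 ≤ ℓ t)
    (hG : ∀ t x, 0 ≤ x → G t x ≤ ℓ t * g x) {c s B : ℝ} (hcs : c ≤ s)
    (hu : ∀ r ∈ Icc c s, 0 ≤ u r) (hgu : ∀ r ∈ Icc c s, g (u r) ≤ B) :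
    v s - v c ≤ B * ∫ r in c..s, ℓ r := by
  rw [hs.snd_sub, ← intervalIntegral.integral_const_mul]
  refine intervalIntegral.integral_mono_on hcs (hs.2.2.2.2.2.1 c s) ((hℓ c s).const_mul B)
    fun r hr => ?_
  calc G r (u r) ≤ ℓ r * g (u r) := hG r _ (hu r hr)
    _ ≤ B * ℓ r := by rw [mul_comm]; exact mul_le_mul_of_nonneg_right (hgu r hr) (hℓ0 r)

theorem eventually_fst_eq_zero {h : ℝ → ℝ → ℝ} (hs : IsPeriodicSol T h G u v) {ℓ g : ℝ → ℝ}
    (hh : ∀ t, Monotone (h t))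
    (hsmp : ∀ K : ℝ, 0 < K → ∃ ε : ℝ, 0 < ε ∧ ∃ β : ℝ, 0 < β ∧
      ∀ t s : ℝ, 0 ≤ s → s < ε → h t (K * g s) ≤ β * s)
    (hgc : ContinuousOn g (Ici 0)) (hg : ∀ x, 0 ≤ x → 0 ≤ g x)
    (hℓ : ∀ t₁ t₂, IntervalIntegrable ℓ volume t₁ t₂) (hℓ0 : ∀ t, 0 ≤ ℓ t)
    (hG : ∀ t x, 0 ≤ x → G t x ≤ ℓ t * g x) (hu : ∀ t, 0 ≤ u t) {c : ℝ} (huc : u c = 0)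
    (hvc : v c = 0) : ∀ᶠ t in 𝓝[>] c, u t = 0 := by
  set A := ∫ r in c..c + 1, ℓ r
  have hA : 0 ≤ A := intervalIntegral.integral_nonneg (by linarith) fun r _ => hℓ0 r
  -- `A + 1` rather than `A`, which may vanish
  obtain ⟨ε, hε, β, hβ, hhg⟩ := hsmp (A + 1) (by linarith)
  obtain ⟨δ₁, hδ₁, huε⟩ := Metric.eventually_nhds_iff.1
    (hs.1.continuousAt.eventually (gt_mem_nhds (huc ▸ hε : u c < ε)))
  set δ := min (δ₁ / 2) (min 1 (1 / (2 * β)))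
  have hδ : 0 < δ := by positivity
  have hδ₁' : δ ≤ δ₁ / 2 := min_le_left _ _
  have hδ1 : δ ≤ 1 := (min_le_right _ _).trans (min_le_left _ _)
  have hβδ : β * δ ≤ 1 / 2 := by
    calc β * δ ≤ β * (1 / (2 * β)) :=
          mul_le_mul_of_nonneg_left ((min_le_right _ _).trans (min_le_right _ _)) hβ.le
      _ = 1 / 2 := by field_simp
  obtain ⟨tm, htm, humax⟩ := isCompact_Icc.exists_isMaxOn (nonempty_Icc.2 (by linarith))
    (hs.1.continuousOn (s := Icc c (c + δ)))
  have hMε : u tm < ε := huε (by rw [Real.dist_eq, abs_lt]; constructor <;> linarith [htm.1, htm.2])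
  obtain ⟨m, hm, hgmax⟩ := isCompact_Icc.exists_isMaxOn (nonempty_Icc.2 (hu tm))
    (hgc.mono fun x hx => hx.1)
  have hv : ∀ s ∈ Icc c (c + δ), v s ≤ (A + 1) * g m := by
    intro s hs'
    have hsub : Icc c s ⊆ Icc c (c + δ) := Icc_subset_Icc_right hs'.2
    have hvs := hs.snd_sub_le_mul_integral hℓ hℓ0 hG hs'.1 (fun r _ => hu r)
      fun r hr => hgmax ⟨hu r, humax (hsub hr)⟩
    have hℓA : ∫ r in c..s, ℓ r ≤ A := intervalIntegral.integral_mono_interval le_rfl hs'.1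
      (by linarith [hs'.2]) (Eventually.of_forall hℓ0) (hℓ c (c + 1))
    nlinarith [hg m hm.1]
  have hM : u tm ≤ β * δ * u tm := by
    have hint : ∫ r in c..tm, h r (v r) ≤ ∫ r in c..tm, β * u tm :=
      intervalIntegral.integral_mono_on htm.1 (hs.2.2.2.2.1 c tm) intervalIntegrable_const
        fun r hr => (hh r (hv r ⟨hr.1, hr.2.trans htm.2⟩)).trans
          ((hhg r m hm.1 (hm.2.trans_lt hMε)).trans (mul_le_mul_of_nonneg_left hm.2 hβ.le))
    rw [← hs.fst_sub, huc, intervalIntegral.integral_const, smul_eq_mul] at hint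
    nlinarith [mul_le_mul_of_nonneg_right (by linarith [htm.2] : tm - c ≤ δ)
      (mul_nonneg hβ.le (hu tm))]
  have hM0 : u tm ≤ 0 := by nlinarith [hu tm]
  filter_upwards [Ioo_mem_nhdsGT (by linarith : c < c + δ)] with t ht
  exact le_antisymm ((humax ⟨ht.1.le, ht.2.le⟩).trans hM0) (hu t)

end IsPeriodicSol

theorem statement2_general
    (T : ℝ) (hT : 0 < T) (lam : ℝ) (hlam : 0 < lam)
    (h : ℝ → ℝ → ℝ) (hhc : Continuous (Function.uncurry h))
    (hh0 : ∀ t : ℝ, h t 0 = 0)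
    (hh1 : ∀ t : ℝ, StrictMono (h t))
    (a : ℝ → ℝ) (haloc : LocallyIntegrable a volume)
    (g : ℝ → ℝ) (hgc : ContinuousOn g (Set.Ici 0))
    (hg0 : g 0 = 0) (hgpos : ∀ s : ℝ, 0 < s → 0 < g s)
    (hsmp : ∀ K : ℝ, 0 < K → ∃ ε : ℝ, 0 < ε ∧ ∃ β : ℝ, 0 < β ∧
      ∀ t s : ℝ, 0 ≤ s → s < ε → h t (K * g s) ≤ β * s)
    (u v : ℝ → ℝ)
    (hsol : IsPeriodicSol T h
      (fun t x => -(if 0 ≤ x then lam * a t * g x else -x)) u v)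
    (hnt : ¬ (∀ t : ℝ, u t = 0 ∧ v t = 0)) :
    ∀ t, 0 < u t := by
  have hg : ∀ x, 0 ≤ x → 0 ≤ g x := fun x hx =>
    hx.eq_or_lt.elim (fun hx0 => hx0 ▸ hg0.ge) fun hx0 => (hgpos x hx0).le
  have hG : ∀ t x, 0 ≤ x → -(if 0 ≤ x then lam * a t * g x else -x) ≤ lam * |a t| * g x := by
    intro t x hx
    rw [if_pos hx]
    nlinarith [mul_le_mul_of_nonneg_left (neg_le_abs (a t)) (mul_nonneg hlam.le (hg x hx))]
  have hℓ : ∀ t₁ t₂, IntervalIntegrable (fun t => lam * |a t|) volume t₁ t₂ := fun t₁ t₂ =>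
    ((haloc.integrableOn_isCompact isCompact_uIcc).intervalIntegrable.abs).const_mul lam
  have hu : ∀ t, 0 ≤ u t :=
    hsol.fst_nonneg hT hhc hh0 hh1 fun t x hx => by simp [not_le.2 hx]
  have hmin : ∀ t, u t = 0 → IsLocalMin u t := fun t hut =>
    Eventually.of_forall fun s => hut ▸ hu s
  intro t
  refine (hu t).lt_of_ne' fun hut => hnt fun s => ?_
  have hzero := hsol.2.2.1.eq_zero_of_forall_eventually_eq_zero hT hsol.1
    (fun c huc => hsol.eventually_fst_eq_zero (fun r => (hh1 r).monotone) hsmp hgc hg hℓ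
      (fun r => by positivity) hG hu huc
      (hsol.snd_eq_zero_of_isLocalMin hhc hh0 (fun r => (hh1 r).injective) (hmin c huc))) hut
  exact ⟨hzero s, hsol.snd_eq_zero_of_isLocalMin hhc hh0 (fun r => (hh1 r).injective)
    (hmin s (hzero s))⟩

theorem statement2
    (T : ℝ) (hT : 0 < T) (lam : ℝ) (hlam : 0 < lam)
    (h : ℝ → ℝ → ℝ) (hhc : Continuous (Function.uncurry h))
    (hhper : ∀ t s : ℝ, h (t + T) s = h t s)
    (hh0 : ∀ t : ℝ, h t 0 = 0)
    (hh1 : ∀ t : ℝ, StrictMono (h t))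
    (a : ℝ → ℝ) (haloc : LocallyIntegrable a volume)
    (haper : Function.Periodic a T)
    (N : ℕ) (σ τ : Fin (N + 1) → ℝ) (hstar : SignChanging T a N σ τ)
    (g : ℝ → ℝ) (hgc : ContinuousOn g (Set.Ici 0))
    (hg0 : g 0 = 0) (hgpos : ∀ s : ℝ, 0 < s → 0 < g s)
    (hsmp : ∀ K : ℝ, 0 < K → ∃ ε : ℝ, 0 < ε ∧ ∃ β : ℝ, 0 < β ∧
      ∀ t s : ℝ, 0 ≤ s → s < ε → h t (K * g s) ≤ β * s)
    (u v : ℝ → ℝ)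
    (hsol : IsPeriodicSol T h
      (fun t x => -(if 0 ≤ x then lam * a t * g x else -x)) u v)
    (hnt : ¬ (∀ t : ℝ, u t = 0 ∧ v t = 0)) :
    ∀ t, 0 < u t :=
  statement2_general T hT lam hlam h hhc hh0 hh1 a haloc g hgc hg0 hgpos hsmp u v hsol hnt
end
end

section
/- Let T > 0. Let h : ℝ × ℝ → ℝ be continuous, T-periodic in the first variable, and satisfy (h0) and (h1). Let a : ℝ → ℝ be a locally integrable T-periodic function satisfying (a#). Let g : [0,+∞) → [0,+∞) be continuous, regularly oscillating at zero, satisfy (g*), and satisfy lim_{s→0⁺} h(t, ±‖a‖_{L¹} g(s))/s = 0 uniformly in t ∈ ℝ (with both choices of sign), where ‖a‖_{L¹} = ∫₀ᵀ |a(t)| dt. Then there exists r₀ > 0 such that for all r ∈ (0, r₀] and all ϑ ∈ (0,1], there is no T-periodic solution (u,v) of the system u' = ϑ h(t,v), v' = -ϑ a(t) g(u) with u(t) > 0 for all t ∈ ℝ and max_t u(t) = r. -/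
open MeasureTheory Set Filter

noncomputable section

/-- `g` is regularly oscillating at zero: `g (ω s) / g s → 1` as `s → 0⁺` and `ω → 1`. -/
def RegOscZero (g : ℝ → ℝ) : Prop :=
  Tendsto (fun p : ℝ × ℝ => g (p.1 * p.2) / g p.2)
    ((nhds 1) ×ˢ (nhdsWithin 0 (Set.Ioi 0))) (nhds 1)

set_option maxHeartbeats 1000000 in
theorem statement6
    (T : ℝ) (hT : 0 < T)
    (h : ℝ → ℝ → ℝ) (hhc : Continuous (Function.uncurry h))
    (hhper : ∀ t s : ℝ, h (t + T) s = h t s)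
    (hh0 : ∀ t : ℝ, h t 0 = 0)
    (hh1 : ∀ t : ℝ, StrictMono (h t))
    (a : ℝ → ℝ) (haloc : LocallyIntegrable a volume)
    (haper : Function.Periodic a T)
    (haneg : (∫ t in (0:ℝ)..T, a t) < 0)
    (g : ℝ → ℝ) (hgc : ContinuousOn g (Set.Ici 0))
    (hg0 : g 0 = 0) (hgpos : ∀ s : ℝ, 0 < s → 0 < g s)
    (hreg : RegOscZero g)
    -- `A1 = ‖a‖_{L¹} = ∫₀ᵀ |a|`
    (A1 : ℝ) (hA1 : A1 = ∫ t in (0:ℝ)..T, |a t|)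
    (hzeroPos : TendstoUniformly (fun s t => h t (A1 * g s) / s)
      (fun _ => 0) (nhdsWithin 0 (Set.Ioi 0)))
    (hzeroNeg : TendstoUniformly (fun s t => h t (-A1 * g s) / s)
      (fun _ => 0) (nhdsWithin 0 (Set.Ioi 0))) :
    ∃ r₀ : ℝ, 0 < r₀ ∧ ∀ r : ℝ, 0 < r → r ≤ r₀ → ∀ θ : ℝ, 0 < θ → θ ≤ 1 →
      ¬ ∃ u v : ℝ → ℝ,
        IsPeriodicSol T (fun t s => θ * h t s) (fun t x => -(θ * a t * g x)) u v ∧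
        (∀ t, 0 < u t) ∧ (∀ t, u t ≤ r) ∧ (∃ t, u t = r) := by
  classical
  set I : ℝ := ∫ t in (0:ℝ)..T, a t with hIdef
  have hIneg : I < 0 := haneg
  have haint : ∀ t₁ t₂ : ℝ, IntervalIntegrable a volume t₁ t₂ := fun t₁ t₂ =>
    intervalIntegrable_iff.2 ((haloc.integrableOn_isCompact isCompact_uIcc).mono_set
      Set.uIoc_subset_uIcc)
  have hA1I : |I| ≤ A1 := by
    rw [hA1]
    exact intervalIntegral.abs_integral_le_integral_abs hT.le
  have hA1pos : 0 < A1 := lt_of_lt_of_le (abs_pos.2 hIneg.ne) hA1I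
  set c : ℝ := -I / (2 * A1) with hcdef
  have hc : 0 < c := by
    apply div_pos (neg_pos.2 hIneg); positivity
  -- extract regular oscillation data
  have hregev : ∀ᶠ p : ℝ × ℝ in (nhds 1) ×ˢ (nhdsWithin 0 (Set.Ioi 0)),
      |g (p.1 * p.2) / g p.2 - 1| < c := by
    have := Metric.tendsto_nhds.mp hreg c hc
    simpa [Real.dist_eq] using this
  obtain ⟨pa, hpa, pb, hpb, hImp⟩ := Filter.eventually_prod_iff.mp hregev
  obtain ⟨η, hη, hball⟩ := Metric.eventually_nhds_iff.mp hpa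
  obtain ⟨δ₁, hδ₁, hδ₁sub⟩ := mem_nhdsGT_iff_exists_Ioo_subset.mp hpb
  have hδ₁pos : (0:ℝ) < δ₁ := hδ₁
  -- extract h-smallness data
  set ε : ℝ := η / (2 * T) with hεdef
  have hε : 0 < ε := by positivity
  have hPos : ∀ᶠ s in nhdsWithin 0 (Set.Ioi 0), ∀ t : ℝ, |h t (A1 * g s) / s| < ε := by
    have := Metric.tendstoUniformly_iff.mp hzeroPos ε hε
    simpa [Real.dist_eq] using this
  have hNeg : ∀ᶠ s in nhdsWithin 0 (Set.Ioi 0), ∀ t : ℝ, |h t (-A1 * g s) / s| < ε := by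
    have := Metric.tendstoUniformly_iff.mp hzeroNeg ε hε
    simpa [Real.dist_eq] using this
  obtain ⟨δ₂, hδ₂, hδ₂sub⟩ := mem_nhdsGT_iff_exists_Ioo_subset.mp hPos
  obtain ⟨δ₃, hδ₃, hδ₃sub⟩ := mem_nhdsGT_iff_exists_Ioo_subset.mp hNeg
  have hδ₂pos : (0:ℝ) < δ₂ := hδ₂
  have hδ₃pos : (0:ℝ) < δ₃ := hδ₃
  refine ⟨min δ₁ (min δ₂ δ₃) / 2, by positivity, ?_⟩
  intro r hr hrle θ hθ hθ1
  rintro ⟨u, v, ⟨huc, hvc, huper, hvper, hFint₀, hGint₀, hueq₀, hveq₀⟩, hupos, hur, tmax0, hutmax0⟩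
  have hmpos : 0 < min δ₁ (min δ₂ δ₃) := lt_min hδ₁pos (lt_min hδ₂pos hδ₃pos)
  have hrδ₁ : r < δ₁ := by
    have := min_le_left δ₁ (min δ₂ δ₃); linarith
  have hrδ₂ : r < δ₂ := by
    have h1 := min_le_right δ₁ (min δ₂ δ₃); have h2 := min_le_left δ₂ δ₃; linarith
  have hrδ₃ : r < δ₃ := by
    have h1 := min_le_right δ₁ (min δ₂ δ₃); have h2 := min_le_right δ₂ δ₃; linarith
  have hgrpos : 0 < g r := hgpos r hr
  have hθne : θ ≠ 0 := ne_of_gt hθ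
  -- restated solution data with explicit lambdas
  have hFint : ∀ t₁ t₂ : ℝ,
      IntervalIntegrable (fun s => θ * h s (v s)) volume t₁ t₂ := hFint₀
  have hGint : ∀ t₁ t₂ : ℝ,
      IntervalIntegrable (fun s => -(θ * a s * g (u s))) volume t₁ t₂ := hGint₀
  have hueq : ∀ t : ℝ, u t = u 0 + ∫ s in (0:ℝ)..t, θ * h s (v s) := hueq₀
  have hveq : ∀ t : ℝ, v t = v 0 + ∫ s in (0:ℝ)..t, -(θ * a s * g (u s)) := hveq₀
  -- continuity of g ∘ u
  have hgCA : ∀ x : ℝ, 0 < x → ContinuousAt g x := fun x hx =>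
    (hgc x hx.le).continuousAt (Ici_mem_nhds hx)
  have hguc : Continuous fun x => g (u x) :=
    continuous_iff_continuousAt.2 fun x => (hgCA (u x) (hupos x)).comp huc.continuousAt
  have hguper : Function.Periodic (fun x => g (u x)) T := fun x => by simp [huper x]
  -- integrability of a * (g ∘ u)
  have hagu : ∀ t₁ t₂ : ℝ, IntervalIntegrable (fun s => a s * g (u s)) volume t₁ t₂ := by
    intro t₁ t₂
    have heq : (fun s => a s * g (u s)) = fun s => (-θ⁻¹) * -(θ * a s * g (u s)) := by
      funext s; field_simp
    rw [heq]
    exact (hGint t₁ t₂).const_mul _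
  -- integral of u' over a period vanishes
  have huT : u T = u 0 := by simpa using huper 0
  have hvT : v T = v 0 := by simpa using hvper 0
  have hint0 : (∫ s in (0:ℝ)..T, θ * h s (v s)) = 0 := by
    have := hueq T; rw [huT] at this; linarith
  have hagu0 : (∫ s in (0:ℝ)..T, a s * g (u s)) = 0 := by
    have h1 : (∫ s in (0:ℝ)..T, -(θ * a s * g (u s))) = 0 := by
      have := hveq T; rw [hvT] at this; linarith
    have heq : (fun s => -(θ * a s * g (u s))) = fun s => (-θ) * (a s * g (u s)) := by
      funext s; ring
    rw [heq, intervalIntegral.integral_const_mul] at h1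
    rcases mul_eq_zero.mp h1 with h' | h'
    · exact absurd h' (by simpa using hθne)
    · exact h'
  -- v has a zero
  have hvzero : ∃ t₀ : ℝ, v t₀ = 0 := by
    by_contra hno
    push_neg at hno
    have hsame : ∀ t : ℝ, 0 < v 0 * v t := by
      intro t
      rcases lt_trichotomy (v 0 * v t) 0 with hlt | heq | hgt
      · exfalso
        have h0mem : (0:ℝ) ∈ uIcc (v 0) (v t) := by
          rcases mul_neg_iff.mp hlt with ⟨h1, h2⟩ | ⟨h1, h2⟩
          · exact mem_uIcc.2 (Or.inr ⟨h2.le, h1.le⟩)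
          · exact mem_uIcc.2 (Or.inl ⟨h1.le, h2.le⟩)
        obtain ⟨x, _, hx⟩ := intermediate_value_uIcc hvc.continuousOn h0mem
        exact hno x hx
      · exfalso
        rcases mul_eq_zero.mp heq with h1 | h1
        exacts [hno 0 h1, hno t h1]
      · exact hgt
    rcases lt_or_gt_of_ne (hno 0) with hv0neg | hv0pos
    · have hvneg : ∀ t, v t < 0 := by
        intro t; nlinarith [hsame t]
      have hposI : 0 < ∫ s in (0:ℝ)..T, -(θ * h s (v s)) := by
        have hneg' : IntervalIntegrable (fun s => -(θ * h s (v s))) volume 0 T := by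
          have := (hFint 0 T).neg
          simpa [Pi.neg_def] using this
        apply intervalIntegral.intervalIntegral_pos_of_pos_on hneg' _ hT
        intro x _
        have hx : h x (v x) < h x 0 := hh1 x (hvneg x)
        rw [hh0 x] at hx
        nlinarith
      have : (∫ s in (0:ℝ)..T, -(θ * h s (v s))) = -∫ s in (0:ℝ)..T, θ * h s (v s) := by
        rw [← intervalIntegral.integral_neg]
      rw [this, hint0] at hposI
      simp at hposI
    · have hvpos : ∀ t, 0 < v t := by
        intro t; nlinarith [hsame t]
      have hposI : 0 < ∫ s in (0:ℝ)..T, θ * h s (v s) := by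
        apply intervalIntegral.intervalIntegral_pos_of_pos_on (hFint 0 T) _ hT
        intro x _
        have hx : h x 0 < h x (v x) := hh1 x (hvpos x)
        rw [hh0 x] at hx
        nlinarith
      rw [hint0] at hposI
      exact lt_irrefl 0 hposI
  obtain ⟨tz, hvtz⟩ := hvzero
  obtain ⟨t₀, ht₀mem, ht₀eq⟩ := hvper.exists_mem_Ico₀ hT tz
  have hvt₀ : v t₀ = 0 := by rw [← ht₀eq, hvtz]
  -- maximum of g ∘ u
  obtain ⟨tstar, htsmem, htsmax⟩ :=
    isCompact_Icc.exists_isMaxOn (nonempty_Icc.2 hT.le) hguc.continuousOn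
  set σ := u tstar with hσdef
  have hσpos : 0 < σ := hupos tstar
  have hσr : σ ≤ r := hur tstar
  have hgσpos : 0 < g σ := hgpos σ hσpos
  have hGmax : ∀ x : ℝ, g (u x) ≤ g σ := by
    intro x
    obtain ⟨y, hy, hxy⟩ := hguper.exists_mem_Ico₀ hT x
    rw [hxy]
    exact htsmax (Ico_subset_Icc_self hy)
  -- bound on |v| on [0, T]
  have habs_per : Function.Periodic (fun t => |a t|) T := fun x => congrArg abs (haper x)
  have hA1shift : (∫ x in t₀..t₀ + T, |a x|) = A1 := by
    rw [hA1]
    simpa using habs_per.intervalIntegral_add_eq t₀ 0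
  have hvbound : ∀ s ∈ Icc (0:ℝ) T, |v s| ≤ A1 * g σ := by
    have key : ∀ s' ∈ Icc t₀ (t₀ + T), |v s'| ≤ A1 * g σ := by
      intro s' hs'
      have hvs' : v s' = ∫ x in t₀..s', -(θ * a x * g (u x)) := by
        have e1 := hveq s'
        have e2 := hveq t₀
        have e3 := intervalIntegral.integral_interval_sub_left (hGint 0 s') (hGint 0 t₀)
        rw [hvt₀] at e2
        linarith
      rw [hvs']
      have h1 : |∫ x in t₀..s', -(θ * a x * g (u x))|
          ≤ ∫ x in t₀..s', |(-(θ * a x * g (u x)))| :=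
        intervalIntegral.abs_integral_le_integral_abs hs'.1
      have h2 : (∫ x in t₀..s', |(-(θ * a x * g (u x)))|)
          ≤ ∫ x in t₀..s', |a x| * g σ := by
        apply intervalIntegral.integral_mono_on hs'.1 ((hGint t₀ s').abs)
          (((haint t₀ s').abs).mul_const (g σ))
        intro x _
        have hg1 : 0 ≤ g (u x) := (hgpos _ (hupos x)).le
        have hg2 : g (u x) ≤ g σ := hGmax x
        have he : |(-(θ * a x * g (u x)))| = θ * (|a x| * g (u x)) := by
          rw [abs_neg, abs_mul, abs_mul, abs_of_pos hθ, abs_of_nonneg hg1, mul_assoc]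
        rw [he]
        nlinarith [mul_le_mul_of_nonneg_left hg2 (abs_nonneg (a x)),
          mul_nonneg (abs_nonneg (a x)) hg1]
      have h3 : (∫ x in t₀..s', |a x| * g σ) ≤ ∫ x in t₀..t₀ + T, |a x| * g σ := by
        apply intervalIntegral.integral_mono_interval le_rfl hs'.1 hs'.2
        · filter_upwards with x
          exact mul_nonneg (abs_nonneg _) hgσpos.le
        · exact ((haint t₀ (t₀ + T)).abs).mul_const (g σ)
      have h4 : (∫ x in t₀..t₀ + T, |a x| * g σ) = A1 * g σ := by
        rw [intervalIntegral.integral_mul_const, hA1shift]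
      linarith
    intro s hs
    rcases le_or_gt t₀ s with hcase | hcase
    · exact key s ⟨hcase, by linarith [hs.2, ht₀mem.1]⟩
    · have hvv : v s = v (s + T) := (hvper s).symm
      rw [hvv]
      exact key (s + T) ⟨by linarith [ht₀mem.2, hs.1], by linarith⟩
  -- pointwise bound on h along the solution
  have hPσ : ∀ t : ℝ, |h t (A1 * g σ) / σ| < ε :=
    hδ₂sub ⟨hσpos, lt_of_le_of_lt hσr hrδ₂⟩
  have hNσ : ∀ t : ℝ, |h t (-A1 * g σ) / σ| < ε :=
    hδ₃sub ⟨hσpos, lt_of_le_of_lt hσr hrδ₃⟩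
  have hhb : ∀ s ∈ Icc (0:ℝ) T, |h s (v s)| ≤ ε * r := by
    intro s hs
    have hv1 : v s ≤ A1 * g σ := (abs_le.mp (hvbound s hs)).2
    have hv2 : -(A1 * g σ) ≤ v s := (abs_le.mp (hvbound s hs)).1
    have hup : h s (v s) ≤ h s (A1 * g σ) := (hh1 s).monotone hv1
    have hdn : h s (-A1 * g σ) ≤ h s (v s) := (hh1 s).monotone (by rw [neg_mul]; exact hv2)
    have hup2 : |h s (A1 * g σ)| < ε * σ := by
      have h5 := hPσ s
      rwa [abs_div, abs_of_pos hσpos, div_lt_iff₀ hσpos] at h5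
    have hdn2 : |h s (-A1 * g σ)| < ε * σ := by
      have h5 := hNσ s
      rwa [abs_div, abs_of_pos hσpos, div_lt_iff₀ hσpos] at h5
    have hεσr : ε * σ ≤ ε * r := mul_le_mul_of_nonneg_left hσr hε.le
    have l1 := le_abs_self (h s (A1 * g σ))
    have l2 := neg_abs_le (h s (-A1 * g σ))
    exact abs_le.2 ⟨by linarith, by linarith⟩
  -- maximum point of u in [0, T)
  obtain ⟨that, hhatmem, hhateq⟩ := huper.exists_mem_Ico₀ hT tmax0
  have hurhat : u that = r := by rw [← hhateq, hutmax0]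
  -- oscillation bound: u stays above r (1 - ε T) on [0, T]
  have hosc : ∀ t ∈ Icc (0:ℝ) T, r * (1 - ε * T) ≤ u t := by
    intro t ht
    have hinteq : u t - u that = ∫ x in that..t, θ * h x (v x) := by
      have e1 := hueq t
      have e2 := hueq that
      have e3 := intervalIntegral.integral_interval_sub_left (hFint 0 t) (hFint 0 that)
      linarith
    have hbnd : |∫ x in that..t, θ * h x (v x)| ≤ ε * r * |t - that| := by
      have hb := intervalIntegral.norm_integral_le_of_norm_le_const
        (C := ε * r) (f := fun x => θ * h x (v x)) (a := that) (b := t) ?_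
      · simpa only [Real.norm_eq_abs] using hb
      · intro x hx
        have hx' : x ∈ Icc (0:ℝ) T :=
          uIcc_subset_Icc (Ico_subset_Icc_self hhatmem) ht (uIoc_subset_uIcc hx)
        have hxb := hhb x hx'
        rw [Real.norm_eq_abs, abs_mul, abs_of_pos hθ]
        nlinarith [abs_nonneg (h x (v x))]
    have htt : |t - that| ≤ T :=
      abs_sub_le_iff.2 ⟨by linarith [ht.1, ht.2, hhatmem.1, hhatmem.2],
        by linarith [ht.1, ht.2, hhatmem.1, hhatmem.2]⟩
    have hbnd2 : |∫ x in that..t, θ * h x (v x)| ≤ ε * r * T :=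
      hbnd.trans (mul_le_mul_of_nonneg_left htt (by positivity))
    have habs := abs_le.mp hbnd2
    have : r * (1 - ε * T) = r - ε * r * T := by ring
    rw [this]
    rw [hurhat] at hinteq
    linarith [habs.1]
  -- closeness of g (u t) to g r
  have hεT : ε * T = η / 2 := by
    rw [hεdef]; field_simp
  have hclose : ∀ t ∈ Icc (0:ℝ) T, |g (u t) - g r| ≤ c * g r := by
    intro t ht
    have h1 : r * (1 - ε * T) ≤ u t := hosc t ht
    have hω1 : u t / r ≤ 1 := (div_le_one hr).2 (hur t)
    have hω2 : 1 - ε * T ≤ u t / r := by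
      rw [le_div_iff₀ hr]; nlinarith
    have hdist : dist (u t / r) 1 < η := by
      rw [Real.dist_eq]
      have : |u t / r - 1| ≤ ε * T := abs_le.2 ⟨by linarith, by linarith [hε.le, hT.le]⟩
      nlinarith [hεT]
    have hpax : pa (u t / r) := hball hdist
    have hpbr : pb r := hδ₁sub ⟨hr, hrδ₁⟩
    have hkey := hImp hpax hpbr
    rw [div_mul_cancel₀ _ (ne_of_gt hr)] at hkey
    have habs : |g (u t) - g r| = |(g (u t) / g r - 1) * g r| := by
      congr 1
      field_simp
    rw [habs, abs_mul, abs_of_pos hgrpos]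
    exact mul_le_mul_of_nonneg_right hkey.le hgrpos.le
  -- final contradiction
  have hsub : (∫ t in (0:ℝ)..T, a t * (g (u t) - g r))
      = (∫ t in (0:ℝ)..T, a t * g (u t)) - ∫ t in (0:ℝ)..T, a t * g r := by
    rw [← intervalIntegral.integral_sub (hagu 0 T) ((haint 0 T).mul_const (g r))]
    congr 1; funext t; ring
  have hconst : (∫ t in (0:ℝ)..T, a t * g r) = I * g r :=
    intervalIntegral.integral_mul_const _ _
  have hEeq : (∫ t in (0:ℝ)..T, a t * (g (u t) - g r)) = -(I * g r) := by
    rw [hsub, hconst, hagu0]; ring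
  have hFi2 : IntervalIntegrable (fun t => a t * (g (u t) - g r)) volume 0 T := by
    have heq : (fun t => a t * (g (u t) - g r)) = fun t => a t * g (u t) - a t * g r := by
      funext t; ring
    rw [heq]
    exact (hagu 0 T).sub ((haint 0 T).mul_const (g r))
  have hEbnd : |∫ t in (0:ℝ)..T, a t * (g (u t) - g r)| ≤ A1 * (c * g r) := by
    have h1 : |∫ t in (0:ℝ)..T, a t * (g (u t) - g r)|
        ≤ ∫ t in (0:ℝ)..T, |a t * (g (u t) - g r)| :=
      intervalIntegral.abs_integral_le_integral_abs hT.le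
    have h2 : (∫ t in (0:ℝ)..T, |a t * (g (u t) - g r)|)
        ≤ ∫ t in (0:ℝ)..T, |a t| * (c * g r) := by
      apply intervalIntegral.integral_mono_on hT.le hFi2.abs
        (((haint 0 T).abs).mul_const (c * g r))
      intro t ht
      rw [abs_mul]
      exact mul_le_mul_of_nonneg_left (hclose t ht) (abs_nonneg _)
    have h3 : (∫ t in (0:ℝ)..T, |a t| * (c * g r)) = A1 * (c * g r) := by
      rw [intervalIntegral.integral_mul_const, hA1]
    linarith
  rw [hEeq] at hEbnd
  have habsE : |-(I * g r)| = (-I) * g r := by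
    rw [abs_neg, abs_mul, abs_of_neg hIneg, abs_of_pos hgrpos]
  rw [habsE] at hEbnd
  have hcfin : A1 * (c * g r) = (-I / 2) * g r := by
    rw [hcdef]; field_simp
  rw [hcfin] at hEbnd
  nlinarith [mul_pos (neg_pos.2 hIneg) hgrpos]
end
end

section
/- Let T > 0. Let h : ℝ × ℝ → ℝ be continuous, T-periodic in the first variable, and satisfy (h0) and (h1). Let a : ℝ → ℝ be a continuous T-periodic function satisfying (a#). Let g : [0,+∞) → [0,+∞) satisfy (g*), be continuously differentiable in a right neighborhood of zero with limsup_{s→0⁺} g'(s)·s/g(s) ≤ C_g for some constant C_g ≥ 0, and satisfy: for every K ∈ ℝ, lim_{s→0⁺} h(t, K g(s))/s = 0 uniformly in t ∈ ℝ. Then there exists r₀ > 0 such that for all r ∈ (0, r₀] and all ϑ ∈ (0,1], there is no T-periodic solution (u,v) of the system u' = ϑ h(t,v), v' = -ϑ a(t) g(u) with u(t) > 0 for all t ∈ ℝ and max_t u(t) = r. -/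
/-!
Put `ψ y = y ^ C / g y` with `C = C_g + 1`. Near `0` the bound `g' s * s ≤ C * g s` makes `ψ`
nondecreasing, and since `v * h t v ≥ 0`, along a solution
`(v ψ(u))' = -ϑ a u^C + ϑ ψ'(u) v h(t, v) ≥ -ϑ a u^C`; integrating over a period gives
`∫ a u^C ≥ 0`. On the other hand `v` vanishes where `u` attains its maximum `r`, so
`|v| ≤ ‖a‖₁ max g(u)`, and the uniform smallness of `h(t, K g(s)) / s` makes `|u'|` a small multiple
of `r`. Hence `u` stays within a factor `ρ` close to `1` of its minimum `m`, `u^C` is nearly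
constant, and `∫ a u^C ≤ m^C (∫ a + ‖a‖₁ (ρ^C - 1)) < 0`.
-/

open MeasureTheory Set Filter

noncomputable section

open Function

namespace Function.Periodic

variable {f f' b : ℝ → ℝ} {T : ℝ}

lemma exists_forall_le_of_continuous (hf : Periodic f T) (hT : T ≠ 0) (hc : Continuous f) :
    ∃ t₀, ∀ t, f t ≤ f t₀ := by
  obtain ⟨_, ⟨t₀, rfl⟩, ht₀⟩ :=
    (hf.compact_of_continuous hT hc).exists_isGreatest (range_nonempty f)
  exact ⟨t₀, fun t => ht₀ ⟨t, rfl⟩⟩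

lemma exists_forall_ge_of_continuous (hf : Periodic f T) (hT : T ≠ 0) (hc : Continuous f) :
    ∃ t₀, ∀ t, f t₀ ≤ f t := by
  obtain ⟨_, ⟨t₀, rfl⟩, ht₀⟩ :=
    (hf.compact_of_continuous hT hc).exists_isLeast (range_nonempty f)
  exact ⟨t₀, fun t => ht₀ ⟨t, rfl⟩⟩

lemma abs_sub_le_integral_of_abs_deriv_le (hT : 0 < T) (hf : Periodic f T) (hb : Periodic b T)
    (hderiv : ∀ t, HasDerivAt f (f' t) t) (hf' : Continuous f') (hbc : Continuous b)
    (hfb : ∀ t, |f' t| ≤ b t) (s t : ℝ) :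
    |f t - f s| ≤ ∫ x in (0:ℝ)..T, b x := by
  obtain ⟨t', ht', hft⟩ := hf.exists_mem_Ico hT t s
  calc |f t - f s| = |∫ x in s..t', f' x| := by
        rw [hft, intervalIntegral.integral_eq_sub_of_hasDerivAt (fun x _ => hderiv x)
          (hf'.intervalIntegrable _ _)]
    _ ≤ ∫ x in s..t', b x :=
        intervalIntegral.norm_integral_le_of_norm_le ht'.1 (f := f') (ae_of_all _ fun x _ => hfb x)
          (hbc.intervalIntegrable _ _)
    _ ≤ ∫ x in s..s + T, b x :=
        intervalIntegral.integral_mono_interval le_rfl ht'.1 ht'.2.le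
          (ae_of_all _ fun x => (abs_nonneg _).trans (hfb x)) (hbc.intervalIntegrable _ _)
    _ = ∫ x in (0:ℝ)..T, b x := by simpa using hb.intervalIntegral_add_eq s 0

end Function.Periodic

lemma hasDerivAt_of_eq_add_integral {u f : ℝ → ℝ} (hf : Continuous f)
    (hu : ∀ t, u t = u 0 + ∫ s in (0:ℝ)..t, f s) (t : ℝ) : HasDerivAt u (f t) t := by
  rw [funext hu]
  exact (hf.integral_hasStrictDerivAt 0 t).hasDerivAt.const_add (u 0)

lemma IsPeriodicSol.hasDerivAt {T : ℝ} {F G : ℝ → ℝ → ℝ} {u v : ℝ → ℝ}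
    (hs : IsPeriodicSol T F G u v) (hF : Continuous fun t => F t (v t))
    (hG : Continuous fun t => G t (u t)) :
    (∀ t, HasDerivAt u (F t (v t)) t) ∧ ∀ t, HasDerivAt v (G t (u t)) t :=
  ⟨hasDerivAt_of_eq_add_integral hF hs.2.2.2.2.2.2.1,
    hasDerivAt_of_eq_add_integral hG hs.2.2.2.2.2.2.2⟩

lemma mul_apply_nonneg_of_monotone {f : ℝ → ℝ} (hf : Monotone f) (h0 : f 0 = 0) (x : ℝ) :
    0 ≤ x * f x := by
  rcases le_total 0 x with hx | hx
  · exact mul_nonneg hx (h0 ▸ hf hx)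
  · exact mul_nonneg_of_nonpos_of_nonpos hx (h0 ▸ hf hx)

lemma abs_apply_le_of_monotone {f : ℝ → ℝ} (hf : Monotone f) {x K B : ℝ} (hx : |x| ≤ K)
    (hK : |f K| ≤ B) (hK' : |f (-K)| ≤ B) : |f x| ≤ B := by
  have h₁ := hf (abs_le.1 hx).1
  have h₂ := hf (abs_le.1 hx).2
  rw [abs_le] at hK hK' ⊢
  constructor <;> linarith

lemma exists_hasDerivAt_rpow_div_nonneg {g : ℝ → ℝ} {C y : ℝ} (hy : 0 < y) (hgy : 0 < g y)
    (hg : DifferentiableAt ℝ g y) (hslope : deriv g y * y ≤ C * g y) :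
    ∃ d, 0 ≤ d ∧ HasDerivAt (fun x => x ^ C / g x) d y := by
  refine ⟨_, div_nonneg ?_ (sq_nonneg _),
    (Real.hasDerivAt_rpow_const (Or.inl hy.ne')).div hg.hasDerivAt hgy.ne'⟩
  have hyC : y ^ C = y ^ (C - 1) * y := by
    rw [Real.rpow_sub_one hy.ne', div_mul_cancel₀ _ hy.ne']
  calc 0 ≤ y ^ (C - 1) * (C * g y - deriv g y * y) :=
        mul_nonneg (Real.rpow_pos_of_pos hy _).le (sub_nonneg.2 hslope)
    _ = _ := by rw [hyC]; ring

lemma exists_one_lt_mul_rpow_sub_one_lt {A C κ : ℝ} (hκ : 0 < κ) :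
    ∃ ρ, 1 < ρ ∧ A * (ρ ^ C - 1) < κ := by
  have hcont : ContinuousAt (fun ρ : ℝ => A * (ρ ^ C - 1)) 1 :=
    continuousAt_const.mul
      ((Real.continuousAt_rpow_const 1 C (Or.inl one_ne_zero)).sub continuousAt_const)
  have hlim : ∀ᶠ ρ in nhds (1:ℝ), A * (ρ ^ C - 1) < κ :=
    hcont.eventually_lt continuousAt_const (by simpa using hκ)
  exact (((hlim.filter_mono nhdsWithin_le_nhds).and self_mem_nhdsWithin).exists
    (f := nhdsWithin 1 (Ioi 1))).imp fun ρ h => ⟨h.2, h.1⟩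

lemma eventually_forall_abs_le_mul_of_tendstoUniformly {ι : Type*} {F : ℝ → ι → ℝ}
    (hF : TendstoUniformly (fun s t => F s t / s) (fun _ => 0) (nhdsWithin 0 (Ioi 0)))
    {ε : ℝ} (hε : 0 < ε) : ∀ᶠ s in nhdsWithin 0 (Ioi 0), ∀ t, |F s t| ≤ ε * s := by
  filter_upwards [Metric.tendstoUniformly_iff.1 hF ε hε, self_mem_nhdsWithin] with s hs hs0 t
  have := hs t
  rw [dist_zero_left, Real.norm_eq_abs, abs_div, abs_of_pos (mem_Ioi.1 hs0),
    div_lt_iff₀ (mem_Ioi.1 hs0)] at this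
  exact this.le

lemma eventually_differentiableAt_and_deriv_mul_le {g : ℝ → ℝ} {C : ℝ}
    (hgdiff : ∃ δ, 0 < δ ∧ ContDiffOn ℝ 1 g (Ioo 0 δ)) (hgpos : ∀ s, 0 < s → 0 < g s)
    (hC : ∀ᶠ s in nhdsWithin 0 (Ioi 0), deriv g s * s / g s ≤ C) :
    ∀ᶠ s in nhdsWithin 0 (Ioi 0), DifferentiableAt ℝ g s ∧ deriv g s * s ≤ C * g s := by
  obtain ⟨δ, hδ, hg⟩ := hgdiff
  filter_upwards [Ioo_mem_nhdsGT hδ, hC] with s hs hCs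
  exact ⟨(hg.differentiableOn one_ne_zero).differentiableAt (isOpen_Ioo.mem_nhds hs),
    (div_le_iff₀ (hgpos s hs.1)).1 hCs⟩

section PlanarSystem

variable {T θ C : ℝ} {h : ℝ → ℝ → ℝ} {a g u v : ℝ → ℝ}

lemma snd_eq_zero_of_forall_fst_le (hθ : 0 < θ) (hh : ∀ t, StrictMono (h t))
    (hh0 : ∀ t, h t 0 = 0) (hu' : ∀ t, HasDerivAt u (θ * h t (v t)) t) {t₁ : ℝ}
    (hmax : ∀ t, u t ≤ u t₁) : v t₁ = 0 := by
  have hzero : θ * h t₁ (v t₁) = 0 :=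
    IsLocalMax.hasDerivAt_eq_zero (Eventually.of_forall hmax) (hu' t₁)
  exact (hh t₁).injective <| ((mul_eq_zero.1 hzero).resolve_left hθ.ne').trans (hh0 t₁).symm

lemma abs_snd_le (hT : 0 < T) (hθ : 0 < θ) (hθ1 : θ ≤ 1) (ha : Continuous a)
    (haper : Periodic a T) (hv : Periodic v T) (hgu : Continuous fun t => g (u t))
    (hv' : ∀ t, HasDerivAt v (-(θ * a t * g (u t))) t) {G : ℝ} (hgu0 : ∀ t, 0 ≤ g (u t))
    (hG : ∀ t, g (u t) ≤ G) {t₁ : ℝ} (hv0 : v t₁ = 0) (t : ℝ) :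
    |v t| ≤ (∫ x in (0:ℝ)..T, |a x|) * G := by
  have hbound : ∀ x, |-(θ * a x * g (u x))| ≤ |a x| * G := fun x => by
    rw [abs_neg, abs_mul, abs_mul, abs_of_pos hθ, abs_of_nonneg (hgu0 x)]
    calc θ * |a x| * g (u x) ≤ 1 * |a x| * G :=
          mul_le_mul (mul_le_mul_of_nonneg_right hθ1 (abs_nonneg _)) (hG x) (hgu0 x)
            (by positivity)
      _ = |a x| * G := by ring
  have hb : Periodic (fun x => |a x| * G) T := fun x => by simp only [haper x]
  have := hv.abs_sub_le_integral_of_abs_deriv_le hT hb hv'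
    ((continuous_const.mul ha).mul hgu).neg (ha.abs.mul continuous_const) hbound t₁ t
  rwa [hv0, sub_zero, intervalIntegral.integral_mul_const] at this

lemma abs_fst_sub_le (hT : 0 < T) (hθ : 0 < θ) (hθ1 : θ ≤ 1) (hh : ∀ t, Monotone (h t))
    (hhv : Continuous fun t => h t (v t)) (hu : Periodic u T)
    (hu' : ∀ t, HasDerivAt u (θ * h t (v t)) t) {K B : ℝ} (hvK : ∀ t, |v t| ≤ K)
    (hK : ∀ t, |h t K| ≤ B ∧ |h t (-K)| ≤ B) (s t : ℝ) : |u t - u s| ≤ T * B := by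
  have hbound : ∀ x, |θ * h x (v x)| ≤ B := fun x => by
    have hx := abs_apply_le_of_monotone (hh x) (hvK x) (hK x).1 (hK x).2
    rw [abs_mul, abs_of_pos hθ]
    calc θ * |h x (v x)| ≤ 1 * B := by gcongr
      _ = B := one_mul B
  simpa using hu.abs_sub_le_integral_of_abs_deriv_le hT (b := fun _ => B) (fun _ => rfl) hu'
    (continuous_const.mul hhv) continuous_const hbound s t

theorem integral_mul_rpow_nonneg (hT : 0 ≤ T) (hθ : 0 < θ) (hh : ∀ t, Monotone (h t))
    (hh0 : ∀ t, h t 0 = 0) (hu : Periodic u T) (hv : Periodic v T)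
    (hu' : ∀ t, HasDerivAt u (θ * h t (v t)) t) (hv' : ∀ t, HasDerivAt v (-(θ * a t * g (u t))) t)
    (hupos : ∀ t, 0 < u t) (hgpos : ∀ t, 0 < g (u t)) (hg : ∀ t, DifferentiableAt ℝ g (u t))
    (hslope : ∀ t, deriv g (u t) * u t ≤ C * g (u t)) (hc : Continuous fun t => a t * u t ^ C) :
    0 ≤ ∫ t in (0:ℝ)..T, a t * u t ^ C := by
  choose d hd0 hd using fun t =>
    exists_hasDerivAt_rpow_div_nonneg (hupos t) (hgpos t) (hg t) (hslope t)
  have hderiv : ∀ t, HasDerivAt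
      (fun t => v t * (u t ^ C / g (u t)) + θ * ∫ s in (0:ℝ)..t, a s * u s ^ C)
      (θ * (d t * (v t * h t (v t)))) t := fun t => by
    refine (((hv' t).mul ((hd t).comp t (hu' t))).add
      ((hc.integral_hasStrictDerivAt 0 t).hasDerivAt.const_mul θ)).congr_deriv ?_
    simp only [comp_apply]
    field_simp [(hgpos t).ne']
    ring
  have hmono := monotone_of_hasDerivAt_nonneg hderiv fun t =>
    mul_nonneg hθ.le (mul_nonneg (hd0 t) (mul_apply_nonneg_of_monotone (hh t) (hh0 t) _))
  have := hmono hT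
  simp only [hu.eq, hv.eq, intervalIntegral.integral_same, mul_zero, add_zero,
    le_add_iff_nonneg_right] at this
  exact (mul_nonneg_iff_of_pos_left hθ).1 this

end PlanarSystem

lemma le_mul_of_sub_le_one_sub_inv_mul {ρ r m σ : ℝ} (hρ : 1 < ρ) (hσr : σ ≤ r)
    (h : r - m ≤ (1 - ρ⁻¹) * σ) : r ≤ ρ * m := by
  have hσ : (1 - ρ⁻¹) * σ ≤ (1 - ρ⁻¹) * r :=
    mul_le_mul_of_nonneg_left hσr (sub_nonneg.2 (inv_le_one_of_one_le₀ hρ.le))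
  calc r = ρ * (r * ρ⁻¹) := by field_simp
    _ ≤ ρ * m := mul_le_mul_of_nonneg_left (by linarith) (zero_lt_one.trans hρ).le

theorem integral_mul_rpow_lt_zero {T C m ρ : ℝ} {a u : ℝ → ℝ} (hT : 0 ≤ T) (hC : 0 ≤ C)
    (hm : 0 < m) (ha : Continuous a) (hu : Continuous u) (hmu : ∀ t, m ≤ u t)
    (huρ : ∀ t, u t ≤ ρ * m)
    (hsmall : (∫ t in (0:ℝ)..T, |a t|) * (ρ ^ C - 1) < -∫ t in (0:ℝ)..T, a t) :
    ∫ t in (0:ℝ)..T, a t * u t ^ C < 0 := by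
  have hρ : 0 ≤ ρ := by
    by_contra! hρ
    nlinarith [hmu 0, huρ 0]
  have hpointwise : ∀ t, a t * u t ^ C ≤ m ^ C * (a t + |a t| * (ρ ^ C - 1)) := fun t => by
    have hlow : m ^ C ≤ u t ^ C := Real.rpow_le_rpow hm.le (hmu t) hC
    have hup : u t ^ C ≤ ρ ^ C * m ^ C := by
      rw [← Real.mul_rpow hρ hm.le]
      exact Real.rpow_le_rpow (hm.le.trans (hmu t)) (huρ t) hC
    have h₁ : a t * (u t ^ C - m ^ C) ≤ |a t| * (u t ^ C - m ^ C) :=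
      mul_le_mul_of_nonneg_right (le_abs_self _) (sub_nonneg.2 hlow)
    have h₂ : |a t| * (u t ^ C - m ^ C) ≤ |a t| * (m ^ C * (ρ ^ C - 1)) :=
      mul_le_mul_of_nonneg_left (by linarith) (abs_nonneg _)
    linear_combination h₁ + h₂
  have huC : Continuous fun t => u t ^ C := hu.rpow_const fun _ => Or.inr hC
  calc ∫ t in (0:ℝ)..T, a t * u t ^ C
      ≤ ∫ t in (0:ℝ)..T, m ^ C * (a t + |a t| * (ρ ^ C - 1)) :=
        intervalIntegral.integral_mono_on hT ((ha.mul huC).intervalIntegrable _ _)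
          ((continuous_const.mul (ha.add (ha.abs.mul continuous_const))).intervalIntegrable _ _)
          fun t _ => hpointwise t
    _ = m ^ C * ((∫ t in (0:ℝ)..T, a t) + (∫ t in (0:ℝ)..T, |a t|) * (ρ ^ C - 1)) := by
        rw [intervalIntegral.integral_const_mul, intervalIntegral.integral_add
          (ha.intervalIntegrable _ _) ((ha.abs.intervalIntegrable _ _).mul_const _),
          intervalIntegral.integral_mul_const]
    _ < 0 := mul_neg_of_pos_of_neg (Real.rpow_pos_of_pos hm C) (by linarith)

theorem statement7_general
    (T : ℝ) (hT : 0 < T)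
    (h : ℝ → ℝ → ℝ) (hhc : Continuous (Function.uncurry h))
    (hh0 : ∀ t : ℝ, h t 0 = 0)
    (hh1 : ∀ t : ℝ, StrictMono (h t))
    (a : ℝ → ℝ) (hac : Continuous a)
    (haper : Function.Periodic a T)
    (haneg : (∫ t in (0:ℝ)..T, a t) < 0)
    (g : ℝ → ℝ)
    (hgpos : ∀ s : ℝ, 0 < s → 0 < g s)
    -- `g` is continuously differentiable in a right neighborhood of zero
    (hgdiff : ∃ δ : ℝ, 0 < δ ∧ ContDiffOn ℝ 1 g (Set.Ioo 0 δ))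
    -- `limsup_{s→0⁺} g'(s)·s/g(s) ≤ C_g` for some constant `C_g ≥ 0`
    (Cg : ℝ) (hCg : 0 ≤ Cg)
    (hlimsup : ∀ ε : ℝ, 0 < ε → ∀ᶠ s in nhdsWithin 0 (Set.Ioi (0:ℝ)),
      deriv g s * s / g s ≤ Cg + ε)
    (hzero : ∀ K : ℝ, TendstoUniformly (fun s t => h t (K * g s) / s)
      (fun _ => 0) (nhdsWithin 0 (Set.Ioi 0))) :
    ∃ r₀ : ℝ, 0 < r₀ ∧ ∀ r : ℝ, 0 < r → r ≤ r₀ → ∀ θ : ℝ, 0 < θ → θ ≤ 1 →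
      ¬ ∃ u v : ℝ → ℝ,
        IsPeriodicSol T (fun t s => θ * h t s) (fun t x => -(θ * a t * g x)) u v ∧
        (∀ t, 0 < u t) ∧ (∀ t, u t ≤ r) ∧ (∃ t, u t = r) := by
  set A := ∫ t in (0:ℝ)..T, |a t|
  obtain ⟨ρ, hρ, hρA⟩ := exists_one_lt_mul_rpow_sub_one_lt (A := A) (C := Cg + 1) (neg_pos.2 haneg)
  -- `ε = (1 - ρ⁻¹) / T` turns the oscillation bound `r - m ≤ T * (ε * r)` into `r ≤ ρ * m`.
  have hε : 0 < (1 - ρ⁻¹) / T := div_pos (sub_pos.2 (inv_lt_one_of_one_lt₀ hρ)) hT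
  obtain ⟨r₀, hr₀, hsmall⟩ := (nhdsGT_basis_Ioc (0:ℝ)).eventually_iff.1
    ((eventually_differentiableAt_and_deriv_mul_le hgdiff hgpos (hlimsup 1 one_pos)).and
      ((eventually_forall_abs_le_mul_of_tendstoUniformly (hzero A) hε).and
        (eventually_forall_abs_le_mul_of_tendstoUniformly (hzero (-A)) hε)))
  refine ⟨r₀, hr₀, fun r hr hrr₀ θ hθ hθ1 => ?_⟩
  rintro ⟨u, v, hsol, hupos, hur, t₁, hut₁⟩
  have hsmall_u := fun t => hsmall ⟨hupos t, (hur t).trans hrr₀⟩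
  have hgu : Continuous fun t => g (u t) := continuous_iff_continuousAt.2 fun t =>
    (hsmall_u t).1.1.continuousAt.comp hsol.1.continuousAt
  have hhv : Continuous fun t => h t (v t) := hhc.comp (continuous_id.prodMk hsol.2.1)
  obtain ⟨hu', hv'⟩ :=
    hsol.hasDerivAt (continuous_const.mul hhv) ((continuous_const.mul hac).mul hgu).neg
  obtain ⟨hu, -, hup, hvp, -⟩ := hsol
  obtain ⟨tσ, hσ⟩ := (hup.comp g).exists_forall_le_of_continuous hT.ne' hgu
  obtain ⟨tm, hm⟩ := hup.exists_forall_ge_of_continuous hT.ne' hu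
  have hvA := abs_snd_le hT hθ hθ1 hac haper hvp hgu hv' (fun t => (hgpos _ (hupos t)).le) hσ
    (snd_eq_zero_of_forall_fst_le hθ hh1 hh0 hu' (hut₁ ▸ hur))
  have hosc := abs_fst_sub_le hT hθ hθ1 (fun t => (hh1 t).monotone) hhv hup hu' hvA
    (fun t => ⟨(hsmall_u tσ).2.1 t, by simpa using (hsmall_u tσ).2.2 t⟩) tm t₁
  have hρm : r ≤ ρ * u tm := le_mul_of_sub_le_one_sub_inv_mul hρ (hur tσ) <| by
    have := (le_abs_self _).trans hosc
    rwa [hut₁, ← mul_assoc, mul_div_cancel₀ _ hT.ne'] at this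
  exact (integral_mul_rpow_lt_zero hT.le (by linarith) (hupos tm) hac hu hm
    (fun t => (hur t).trans hρm) hρA).not_ge
    (integral_mul_rpow_nonneg hT.le hθ (fun t => (hh1 t).monotone) hh0 hup hvp hu' hv' hupos
      (fun t => hgpos _ (hupos t)) (fun t => (hsmall_u t).1.1) (fun t => (hsmall_u t).1.2)
      (hac.mul (hu.rpow_const fun _ => Or.inr (by linarith))))

theorem statement7
    (T : ℝ) (hT : 0 < T)
    (h : ℝ → ℝ → ℝ) (hhc : Continuous (Function.uncurry h))
    (hhper : ∀ t s : ℝ, h (t + T) s = h t s)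
    (hh0 : ∀ t : ℝ, h t 0 = 0)
    (hh1 : ∀ t : ℝ, StrictMono (h t))
    (a : ℝ → ℝ) (hac : Continuous a)
    (haper : Function.Periodic a T)
    (haneg : (∫ t in (0:ℝ)..T, a t) < 0)
    (g : ℝ → ℝ)
    (hg0 : g 0 = 0) (hgpos : ∀ s : ℝ, 0 < s → 0 < g s)
    -- `g` is continuously differentiable in a right neighborhood of zero
    (hgdiff : ∃ δ : ℝ, 0 < δ ∧ ContDiffOn ℝ 1 g (Set.Ioo 0 δ))
    -- `limsup_{s→0⁺} g'(s)·s/g(s) ≤ C_g` for some constant `C_g ≥ 0`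
    (Cg : ℝ) (hCg : 0 ≤ Cg)
    (hlimsup : ∀ ε : ℝ, 0 < ε → ∀ᶠ s in nhdsWithin 0 (Set.Ioi (0:ℝ)),
      deriv g s * s / g s ≤ Cg + ε)
    (hzero : ∀ K : ℝ, TendstoUniformly (fun s t => h t (K * g s) / s)
      (fun _ => 0) (nhdsWithin 0 (Set.Ioi 0))) :
    ∃ r₀ : ℝ, 0 < r₀ ∧ ∀ r : ℝ, 0 < r → r ≤ r₀ → ∀ θ : ℝ, 0 < θ → θ ≤ 1 →
      ¬ ∃ u v : ℝ → ℝ,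
        IsPeriodicSol T (fun t s => θ * h t s) (fun t x => -(θ * a t * g x)) u v ∧
        (∀ t, 0 < u t) ∧ (∀ t, u t ≤ r) ∧ (∃ t, u t = r) :=
  statement7_general T hT h hhc hh0 hh1 a hac haper haneg g hgpos hgdiff Cg hCg hlimsup hzero
end
end

section
/- Let T > 0 and λ > 0. Let h : ℝ × ℝ → ℝ be continuous, T-periodic in the first variable, and satisfy (h0) and (h1). Let a : ℝ → ℝ be a locally integrable T-periodic function satisfying (a*), with positivity intervals J₁, …, J_N. Let g : [0,+∞) → [0,+∞) be continuous and satisfy (g*). If (u,v) is a non-trivial T-periodic solution of the system u' = h(t,v), v' = -λ a(t) g(u) with u(t) ≥ 0 for all t ∈ ℝ, then there exist an index n ∈ {1,…,N} and a point t* ∈ Jₙ such that u(t*) = max_{t∈ℝ} u(t). -/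
open MeasureTheory Set Filter

noncomputable section

theorem statement8
    (T : ℝ) (hT : 0 < T) (lam : ℝ) (hlam : 0 < lam)
    (h : ℝ → ℝ → ℝ) (hhc : Continuous (Function.uncurry h))
    (hhper : ∀ t s : ℝ, h (t + T) s = h t s)
    (hh0 : ∀ t : ℝ, h t 0 = 0)
    (hh1 : ∀ t : ℝ, StrictMono (h t))
    (a : ℝ → ℝ) (haloc : LocallyIntegrable a volume)
    (haper : Function.Periodic a T)
    (N : ℕ) (σ τ : Fin (N + 1) → ℝ) (hstar : SignChanging T a N σ τ)
    (g : ℝ → ℝ) (hgc : ContinuousOn g (Set.Ici 0))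
    (hg0 : g 0 = 0) (hgpos : ∀ s : ℝ, 0 < s → 0 < g s)
    (u v : ℝ → ℝ)
    (hsol : IsPeriodicSol T h (fun t x => -(lam * a t * g x)) u v)
    (hnt : ¬ (∀ t : ℝ, u t = 0 ∧ v t = 0))
    (hunn : ∀ t, 0 ≤ u t) :
    ∃ n : Fin (N + 1), ∃ tstar ∈ Set.Icc (σ n) (τ n), ∀ t : ℝ, u t ≤ u tstar := by
  obtain ⟨huc, hvc, huper, hvper, hFi, hGi, huEq, hvEq⟩ := hsol
  obtain ⟨hστ, hord, hlast, -, haneg⟩ := hstar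
  -- derivative of u
  have hcont : Continuous (fun s => h s (v s)) := hhc.comp (continuous_id.prodMk hvc)
  have hderiv : ∀ t, HasDerivAt u (h t (v t)) t := by
    intro t
    have h1 : HasDerivAt (fun t => u 0 + ∫ s in (0:ℝ)..t, h s (v s)) (h t (v t)) t :=
      ((hcont.integral_hasStrictDerivAt 0 t).hasDerivAt).const_add (u 0)
    exact h1.congr_of_eventuallyEq (Eventually.of_forall fun x => huEq x)
  -- g (u t) is nonneg
  have hgnn : ∀ t, 0 ≤ g (u t) := by
    intro t
    rcases eq_or_lt_of_le (hunn t) with h1 | h1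
    · rw [← h1, hg0]
    · exact (hgpos _ h1).le
  -- global max point in Icc (σ 0) (σ 0 + T)
  obtain ⟨t₁, ht₁mem, ht₁max⟩ :=
    (isCompact_Icc (a := σ 0) (b := σ 0 + T)).exists_isMaxOn
      (nonempty_Icc.2 (by linarith)) huc.continuousOn
  have hglob : ∀ t : ℝ, u t ≤ u t₁ := by
    intro t
    have hm := sub_toIcoDiv_zsmul_mem_Ico hT (σ 0) t
    have : u (t - toIcoDiv hT (σ 0) t • T) = u t := huper.sub_zsmul_eq _
    rw [← this]
    exact ht₁max (Ico_subset_Icc_self hm)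
  -- reduce to the case t₀ ∈ Ico (σ 0) (σ 0 + T)
  rcases eq_or_lt_of_le ht₁mem.2 with hend | hlt
  · -- t₁ = σ 0 + T, so max attained at σ 0 ∈ J 0
    refine ⟨0, σ 0, ⟨le_refl _, (hστ 0).le⟩, fun t => ?_⟩
    have : u (σ 0) = u t₁ := by rw [hend, huper (σ 0)]
    rw [this]; exact hglob t
  set t₀ := t₁ with ht₀def
  have ht₀ : t₀ ∈ Ico (σ 0) (σ 0 + T) := ⟨ht₁mem.1, hlt⟩
  -- v t₀ = 0
  have hvt₀ : v t₀ = 0 := by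
    have hloc : IsLocalMax u t₀ := Eventually.of_forall fun t => hglob t
    have h0 : h t₀ (v t₀) = 0 := hloc.hasDerivAt_eq_zero (hderiv t₀)
    have := (hh1 t₀).injective (h0.trans (hh0 t₀).symm)
    exact this
  -- if t₀ is in some Jₙ, we are done
  by_cases hin : ∃ n, t₀ ∈ Icc (σ n) (τ n)
  · obtain ⟨n, hn⟩ := hin
    exact ⟨n, t₀, hn, hglob⟩
  push_neg at hin
  -- ordering facts
  have hττ : ∀ m n : Fin (N + 1), m ≤ n → τ m ≤ τ n := by
    intro m n hmn
    rcases lt_or_eq_of_le hmn with h1 | h1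
    · exact ((hord m n h1).trans (hστ n)).le
    · rw [h1]
  have hσσ : ∀ n : Fin (N + 1), σ 0 ≤ σ n := by
    intro n
    rcases eq_or_lt_of_le (Fin.zero_le n) with h1 | h1
    · rw [← h1]
    · exact ((hστ 0).trans (hord 0 n h1)).le
  have ht₀τ0 : τ 0 < t₀ := by
    by_contra hc
    exact hin 0 ⟨ht₀.1, not_lt.1 hc⟩
  -- the last interval to the left of t₀
  have hFne : (Finset.univ.filter (fun m : Fin (N + 1) => τ m < t₀)).Nonempty :=
    ⟨0, by simp [ht₀τ0]⟩
  set n := (Finset.univ.filter (fun m : Fin (N + 1) => τ m < t₀)).max' hFne with hn_def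
  have hnlt : τ n < t₀ := by
    have := (Finset.univ.filter (fun m : Fin (N + 1) => τ m < t₀)).max'_mem hFne
    simpa using this
  have hnmax : ∀ m : Fin (N + 1), τ m < t₀ → m ≤ n := by
    intro m hm
    exact Finset.le_max' _ m (by simpa using hm)
  -- the gap (τ n, t₀) is in the negativity region
  have hgap : ∀ s : ℝ, s ∈ Ioo (τ n) t₀ →
      s ∈ Ico (σ 0) (σ 0 + T) \ (⋃ m, Icc (σ m) (τ m)) := by
    intro s hs
    refine ⟨⟨?_, lt_trans hs.2 ht₀.2⟩, ?_⟩
    · exact le_of_lt (lt_of_le_of_lt ((hσσ n).trans (hστ n).le) hs.1)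
    · intro hmem
      obtain ⟨S, ⟨m, rfl⟩, hmS⟩ := hmem
      rcases le_or_gt m n with hmn | hmn
      · exact absurd hmS.2 (not_le.2 (lt_of_le_of_lt (hττ m n hmn) hs.1))
      · have h1 : t₀ ≤ τ m := not_lt.1 fun hc => absurd (hnmax m hc) (not_le.2 hmn)
        have h2 : t₀ < σ m := by
          by_contra hc
          exact hin m ⟨not_lt.1 hc, h1⟩
        exact absurd hmS.1 (not_le.2 (lt_trans hs.2 h2))
  -- v is monotone on [τ n, t₀]
  have hae : ∀ᵐ s ∂volume, s ∈ Icc (τ n) t₀ → 0 ≤ -(lam * a s * g (u s)) := by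
    have h2 : ∀ᵐ s : ℝ ∂volume, s ∉ ({τ n, t₀} : Set ℝ) := by
      rw [← measure_eq_zero_iff_ae_notMem]
      exact measure_union_null (measure_singleton _) (measure_singleton _)
    filter_upwards [haneg, h2] with s h1 h2 hs
    have hIoo : s ∈ Ioo (τ n) t₀ := by
      rcases lt_or_eq_of_le hs.1 with h3 | h3
      · rcases lt_or_eq_of_le hs.2 with h4 | h4
        · exact ⟨h3, h4⟩
        · exact absurd (Or.inr h4) (by simpa using h2)
      · exact absurd (Or.inl h3.symm) (by simpa using h2)
    have has : a s ≤ 0 := h1 (hgap s hIoo)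
    have : lam * a s * g (u s) ≤ 0 :=
      mul_nonpos_of_nonpos_of_nonneg (mul_nonpos_of_nonneg_of_nonpos hlam.le has) (hgnn s)
    linarith
  have hvmono : ∀ x y : ℝ, τ n ≤ x → x ≤ y → y ≤ t₀ → v x ≤ v y := by
    intro x y hx hxy hy
    have hsum := intervalIntegral.integral_add_adjacent_intervals (hGi 0 x) (hGi x y)
    have hdiff : v y - v x = ∫ s in x..y, -(lam * a s * g (u s)) := by
      rw [hvEq x, hvEq y, ← hsum]; ring
    have hnn : 0 ≤ ∫ s in x..y, -(lam * a s * g (u s)) := by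
      apply intervalIntegral.integral_nonneg_of_ae_restrict hxy
      filter_upwards [ae_restrict_mem measurableSet_Icc, ae_restrict_of_ae hae]
        with s hs h1
      exact h1 ⟨hx.trans hs.1, hs.2.trans hy⟩
    linarith
  -- hence v ≤ 0 on [τ n, t₀], so u' ≤ 0 there
  have hvle : ∀ s ∈ Icc (τ n) t₀, v s ≤ 0 := by
    intro s hs
    have := hvmono s t₀ hs.1 hs.2 le_rfl
    rw [hvt₀] at this; exact this
  have hune : AntitoneOn u (Icc (τ n) t₀) := by
    apply antitoneOn_of_deriv_nonpos (convex_Icc _ _) huc.continuousOn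
    · intro x _
      exact (hderiv x).differentiableAt.differentiableWithinAt
    · intro x hx
      rw [interior_Icc] at hx
      rw [(hderiv x).deriv]
      have hvx : v x ≤ 0 := hvle x (Ioo_subset_Icc_self hx)
      calc h x (v x) ≤ h x 0 := (hh1 x).monotone hvx
        _ = 0 := hh0 x
  have hfin : u t₀ ≤ u (τ n) :=
    hune ⟨le_rfl, hnlt.le⟩ ⟨hnlt.le, le_rfl⟩ hnlt.le
  exact ⟨n, τ n, ⟨(hστ n).le, le_rfl⟩, fun t => (hglob t).trans hfin⟩
end
end

section
/- Let T > 0. Let h : ℝ × ℝ → ℝ be continuous, T-periodic in the first variable, and satisfy (h0) and (h1). Let a : ℝ → ℝ be a locally integrable T-periodic function satisfying (a*), with positivity intervals J₁, …, J_N. Let g : [0,+∞) → [0,+∞) be continuous and satisfy (g*). Then there exist R > 0 and λ* > 0 (depending on R) such that for every λ > λ*, every α ≥ 0, and every non-negative locally integrable T-periodic function w vanishing a.e. on the complement of J₁ ∪ … ∪ J_N in a period, there is no T-periodic solution (u,v) of the system u' = h(t,v), v' = -λ a(t) g(u) - α w(t) with 0 ≤ u(t) ≤ max_τ u(τ) =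 R for all t ∈ ℝ. -/
open MeasureTheory Set Filter

noncomputable section

set_option maxHeartbeats 1000000

lemma aux_per_min {T : ℝ} (hT : 0 < T) {f : ℝ → ℝ} (hf : Continuous f)
    (hper : Function.Periodic f T) : ∃ t₀, ∀ t, f t₀ ≤ f t := by
  obtain ⟨t₀, ht₀, hmin⟩ := isCompact_Icc.exists_isMinOn (nonempty_Icc.2 hT.le)
    hf.continuousOn
  refine ⟨t₀, fun t => ?_⟩
  obtain ⟨y, hy, hfy⟩ := hper.exists_mem_Ico₀ hT t
  rw [hfy]
  exact hmin (Ico_subset_Icc_self hy)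

lemma aux_int_pos {a : ℝ → ℝ} (hInt : ∀ x y : ℝ, IntervalIntegrable a volume x y)
    {x y : ℝ} (hxy : x < y)
    (hpos : ∀ᵐ s ∂(volume.restrict (Set.Ioc x y)), 0 < a s) :
    0 < ∫ s in x..y, a s := by
  have hnn : 0 ≤ᵐ[volume.restrict (Set.Ioc x y)] a := hpos.mono fun s hs => hs.le
  have hge : 0 ≤ ∫ s in x..y, a s := by
    rw [intervalIntegral.integral_of_le hxy.le]
    exact setIntegral_nonneg_ae measurableSet_Ioc (ae_imp_of_ae_restrict hnn)
  rcases hge.eq_or_lt with heq | hlt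
  · exfalso
    have hz : a =ᵐ[volume.restrict (Set.Ioc x y)] 0 :=
      (intervalIntegral.integral_eq_zero_iff_of_le_of_nonneg_ae hxy.le hnn
        (hInt x y)).mp heq.symm
    have : ∀ᵐ s ∂(volume.restrict (Set.Ioc x y)), False := by
      filter_upwards [hpos, hz] with s h1 h2
      exact absurd h2 h1.ne'
    have h0 : volume.restrict (Set.Ioc x y) = 0 := by
      rwa [Filter.eventually_false_iff_eq_bot, ae_eq_bot] at this
    have := congrArg (fun μ : Measure ℝ => μ Set.univ) h0
    simp [Measure.restrict_apply_univ] at this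
    exact absurd this (not_le.mpr hxy)
  · exact hlt


theorem statement9
    (T : ℝ) (hT : 0 < T)
    (h : ℝ → ℝ → ℝ) (hhc : Continuous (Function.uncurry h))
    (hhper : ∀ t s : ℝ, h (t + T) s = h t s)
    (hh0 : ∀ t : ℝ, h t 0 = 0)
    (hh1 : ∀ t : ℝ, StrictMono (h t))
    (a : ℝ → ℝ) (haloc : LocallyIntegrable a volume)
    (haper : Function.Periodic a T)
    (N : ℕ) (σ τ : Fin (N + 1) → ℝ) (hstar : SignChanging T a N σ τ)
    (g : ℝ → ℝ) (hgc : ContinuousOn g (Set.Ici 0))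
    (hg0 : g 0 = 0) (hgpos : ∀ s : ℝ, 0 < s → 0 < g s) :
    ∃ R : ℝ, 0 < R ∧ ∃ lam0 : ℝ, 0 < lam0 ∧
      ∀ lam : ℝ, lam0 < lam → ∀ α : ℝ, 0 ≤ α → ∀ w : ℝ → ℝ,
        (∀ t, 0 ≤ w t) → LocallyIntegrable w volume → Function.Periodic w T →
        (∀ᵐ t ∂volume,
          t ∈ Set.Ico (σ 0) (σ 0 + T) \ (⋃ n, Set.Icc (σ n) (τ n)) → w t = 0) →
        ¬ ∃ u v : ℝ → ℝ,
          IsPeriodicSol T h (fun t x => -(lam * a t * g x + α * w t)) u v ∧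
          (∀ t, 0 ≤ u t) ∧ (∀ t, u t ≤ R) ∧ (∃ t, u t = R) := by
  obtain ⟨hσ, hord, hτT, hapos, haneg⟩ := hstar
  have hne : (Finset.univ : Finset (Fin (N + 1))).Nonempty := ⟨0, Finset.mem_univ 0⟩
  -- the minimal length of the intervals
  obtain ⟨δ, hδpos, hδle⟩ : ∃ δ : ℝ, 0 < δ ∧ ∀ n, δ ≤ τ n - σ n := by
    refine ⟨Finset.univ.inf' hne (fun n => τ n - σ n), ?_, ?_⟩
    · exact (Finset.lt_inf'_iff hne).2 fun n _ => sub_pos.2 (hσ n)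
    · exact fun n => Finset.inf'_le _ (Finset.mem_univ n)
  -- constants from h
  obtain ⟨c₂, hc₂pos, hc₂all⟩ : ∃ c₂ : ℝ, 0 < c₂ ∧ ∀ t, c₂ ≤ h t 1 := by
    obtain ⟨tc2, htc2⟩ := aux_per_min hT (f := fun t : ℝ => h t 1)
      (hhc.comp (continuous_id.prodMk continuous_const)) (fun t => hhper t 1)
    refine ⟨h tc2 1, ?_, htc2⟩
    have := hh1 tc2 (show (0:ℝ) < 1 by norm_num)
    rwa [hh0 tc2] at this
  obtain ⟨c₁, hc₁pos, hc₁all⟩ : ∃ c₁ : ℝ, 0 < c₁ ∧ ∀ t, h t (-1) ≤ -c₁ := by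
    obtain ⟨tc1, htc1⟩ := aux_per_min hT (f := fun t : ℝ => -h t (-1))
      ((hhc.comp (continuous_id.prodMk continuous_const) : Continuous
        fun t : ℝ => h t (-1)).neg) (fun t => by simp [hhper])
    refine ⟨-h tc1 (-1), ?_, fun t => by have := htc1 t; linarith⟩
    have := hh1 tc1 (show (-1:ℝ) < 0 by norm_num)
    rw [hh0 tc1] at this
    linarith
  -- uniform bound H₀ on h(·,1) and -h(·,-1)
  obtain ⟨H₀, hH₀pos, hH₀1, hH₀2⟩ : ∃ H₀ : ℝ, 0 < H₀ ∧ (∀ t, h t 1 ≤ H₀) ∧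
      ∀ t, -H₀ ≤ h t (-1) := by
    have hcont1 : Continuous fun t : ℝ => h t 1 :=
      hhc.comp (continuous_id.prodMk continuous_const)
    have hcont2 : Continuous fun t : ℝ => h t (-1) :=
      hhc.comp (continuous_id.prodMk continuous_const)
    obtain ⟨tH, htH⟩ := aux_per_min hT
      (f := fun t : ℝ => -(max (h t 1) (-(h t (-1)))))
      ((hcont1.max hcont2.neg).neg) (fun t => by simp [hhper])
    have hall : ∀ t, max (h t 1) (-(h t (-1))) ≤ max (h tH 1) (-(h tH (-1))) := by
      intro t; have := htH t; simpa using this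
    refine ⟨max (h tH 1) (-(h tH (-1))), ?_, fun t => le_trans (le_max_left _ _) (hall t),
      fun t => ?_⟩
    · refine lt_max_of_lt_left ?_
      have := hh1 tH (show (0:ℝ) < 1 by norm_num); rwa [hh0 tH] at this
    · have := le_trans (le_max_right _ _) (hall t)
      linarith
  -- the radius R
  obtain ⟨R, hRpos, hRc₁, hRc₂⟩ : ∃ R : ℝ, 0 < R ∧ R < c₁ * δ / 4 ∧ R < c₂ * δ / 4 := by
    refine ⟨min 1 (min (c₁ * δ / 8) (c₂ * δ / 8)), ?_, ?_, ?_⟩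
    · apply lt_min one_pos
      apply lt_min <;> positivity
    · have h1 : min 1 (min (c₁ * δ / 8) (c₂ * δ / 8)) ≤ c₁ * δ / 8 :=
        le_trans (min_le_right _ _) (min_le_left _ _)
      nlinarith
    · have h1 : min 1 (min (c₁ * δ / 8) (c₂ * δ / 8)) ≤ c₂ * δ / 8 :=
        le_trans (min_le_right _ _) (min_le_right _ _)
      nlinarith
  -- minimum of g on [R/2, R]
  obtain ⟨m, hmpos, hmle⟩ : ∃ m : ℝ, 0 < m ∧ ∀ s ∈ Set.Icc (R / 2) R, m ≤ g s := by
    obtain ⟨sm, hsm, hsmin⟩ := isCompact_Icc.exists_isMinOn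
      (nonempty_Icc.2 (by linarith : R / 2 ≤ R))
      (hgc.mono (fun x hx => le_trans (by linarith : (0:ℝ) ≤ R / 2) hx.1))
    exact ⟨g sm, hgpos sm (lt_of_lt_of_le (by linarith) hsm.1), fun s hs => hsmin hs⟩
  -- the small length ρ
  obtain ⟨ρ, hρpos, hρδ, hρH⟩ : ∃ ρ : ℝ, 0 < ρ ∧ ρ ≤ δ / 4 ∧ H₀ * ρ ≤ R / 2 := by
    refine ⟨min (δ / 4) (R / (2 * H₀)), lt_min (by linarith) (by positivity),
      min_le_left _ _, ?_⟩
    have h1 : min (δ / 4) (R / (2 * H₀)) ≤ R / (2 * H₀) := min_le_right _ _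
    calc H₀ * min (δ / 4) (R / (2 * H₀)) ≤ H₀ * (R / (2 * H₀)) := by nlinarith
    _ = R / 2 := by field_simp
  -- interval integrability of a
  have haInt : ∀ x y : ℝ, IntervalIntegrable a volume x y := by
    intro x y
    rw [intervalIntegrable_iff]
    exact (haloc.integrableOn_isCompact isCompact_uIcc).mono_set uIoc_subset_uIcc
  -- a uniform lower bound for sliding-window integrals of a
  obtain ⟨Astar, hAstarpos, hAstarle⟩ : ∃ As : ℝ, 0 < As ∧
      ∀ n : Fin (N + 1), ∀ t ∈ Set.Icc (σ n) (τ n - ρ), As ≤ ∫ s in t..(t + ρ), a s := by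
    have hΦc : Continuous fun t : ℝ => ∫ s in t..(t + ρ), a s := by
      have hF : Continuous fun t : ℝ => ∫ s in (0:ℝ)..t, a s :=
        intervalIntegral.continuous_primitive haInt 0
      have heq : (fun t : ℝ => ∫ s in t..(t + ρ), a s)
          = fun t => (∫ s in (0:ℝ)..(t + ρ), a s) - ∫ s in (0:ℝ)..t, a s := by
        funext t
        rw [eq_sub_iff_add_eq, add_comm]
        exact intervalIntegral.integral_add_adjacent_intervals (haInt 0 t) (haInt t (t + ρ))
      rw [heq]
      exact (hF.comp (continuous_id.add continuous_const)).sub hF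
    have hΦpos : ∀ n : Fin (N + 1), ∀ t ∈ Set.Icc (σ n) (τ n - ρ),
        0 < ∫ s in t..(t + ρ), a s := by
      intro n t ht
      apply aux_int_pos haInt (by linarith : t < t + ρ)
      have h1 := ae_restrict_of_ae (μ := volume) (s := Set.Ioc t (t + ρ)) (hapos n)
      filter_upwards [h1, ae_restrict_mem measurableSet_Ioc] with s hs hmem
      exact hs ⟨le_trans ht.1 hmem.1.le, le_trans hmem.2 (by linarith [ht.2])⟩
    have hA : ∀ n : Fin (N + 1), ∃ A : ℝ, 0 < A ∧
        ∀ t ∈ Set.Icc (σ n) (τ n - ρ), A ≤ ∫ s in t..(t + ρ), a s := by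
      intro n
      have hnen : (Set.Icc (σ n) (τ n - ρ)).Nonempty := by
        apply nonempty_Icc.2
        have := hδle n
        linarith
      obtain ⟨t₀, ht₀, hmin⟩ := isCompact_Icc.exists_isMinOn hnen hΦc.continuousOn
      exact ⟨_, hΦpos n t₀ ht₀, fun t ht => hmin ht⟩
    choose A hApos hAle using hA
    refine ⟨Finset.univ.inf' hne A, (Finset.lt_inf'_iff hne).2 fun n _ => hApos n,
      fun n t ht => le_trans (Finset.inf'_le _ (Finset.mem_univ n)) (hAle n t ht)⟩
  -- and lam0
  refine ⟨R, hRpos, 1 / (m * Astar), by positivity, ?_⟩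
  intro lam hlam α hα w hw0 hwloc hwper hwae
  rintro ⟨u, v, ⟨huc, hvc, hup, hvp, hFint, hGint, hueq, hveq⟩, hu0, huR, huRmax⟩
  have hlampos : 0 < lam := lt_trans (by positivity) hlam
  have hlamA : 1 < lam * (m * Astar) := by
    rw [show (1:ℝ) = (1 / (m * Astar)) * (m * Astar) by field_simp]
    exact mul_lt_mul_of_pos_right hlam (by positivity)
  set W : ℝ → ℝ := fun s => lam * a s * g (u s) + α * w s with hWdef
  have hWint : ∀ x y : ℝ, IntervalIntegrable W volume x y := by
    intro x y
    have h2 := (hGint x y).neg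
    have heq : (-fun s => (fun t x => -(lam * a t * g x + α * w t)) s (u s)) = W := by
      funext s; simp [hWdef]
    rwa [heq] at h2
  have hgu : ∀ s, 0 ≤ g (u s) := by
    intro s
    rcases (hu0 s).eq_or_lt with hs | hs
    · rw [← hs, hg0]
    · exact (hgpos _ hs).le
  have hvdiff : ∀ x y : ℝ, v y - v x = -∫ s in x..y, W s := by
    intro x y
    rw [hveq y, hveq x]
    have := intervalIntegral.integral_interval_sub_left (hGint 0 y) (hGint 0 x)
    rw [add_sub_add_left_eq_sub, this, intervalIntegral.integral_neg]
  have hudiff : ∀ x y : ℝ, u y - u x = ∫ s in x..y, h s (v s) := by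
    intro x y
    rw [hueq y, hueq x]
    rw [add_sub_add_left_eq_sub]
    exact intervalIntegral.integral_interval_sub_left (hFint 0 y) (hFint 0 x)
  -- v is nonincreasing on each J_n
  have hv_mono_J : ∀ n : Fin (N + 1), ∀ x y, σ n ≤ x → x ≤ y → y ≤ τ n → v y ≤ v x := by
    intro n x y hx hxy hy
    have hW : ∀ᵐ s ∂(volume.restrict (Set.Icc x y)), 0 ≤ W s := by
      filter_upwards [ae_restrict_of_ae (μ := volume) (s := Set.Icc x y) (hapos n),
        ae_restrict_mem measurableSet_Icc] with s hs hmem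
      have ha : 0 < a s := hs ⟨le_trans hx hmem.1, le_trans hmem.2 hy⟩
      have : 0 ≤ lam * a s * g (u s) :=
        mul_nonneg (mul_nonneg hlampos.le ha.le) (hgu s)
      have h2 : 0 ≤ α * w s := mul_nonneg hα (hw0 s)
      simp only [hWdef]; linarith
    have h0 : 0 ≤ ∫ s in x..y, W s :=
      intervalIntegral.integral_nonneg_of_ae_restrict hxy hW
    have := hvdiff x y
    linarith
  -- v is nondecreasing across the negativity region
  have hv_gap : ∀ x y : ℝ, x ≤ y →
      (Set.Ioo x y ⊆ Set.Ico (σ 0) (σ 0 + T) \ (⋃ n, Set.Icc (σ n) (τ n))) →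
      v x ≤ v y := by
    intro x y hxy hsub
    have hfin : volume ({x, y} : Set ℝ) = 0 := (Set.Finite.insert x (Set.finite_singleton y)).measure_zero _
    have hae : ∀ᵐ s ∂volume, s ∉ ({x, y} : Set ℝ) := measure_eq_zero_iff_ae_notMem.mp hfin
    have hW : ∀ᵐ s ∂(volume.restrict (Set.Icc x y)), W s ≤ 0 := by
      filter_upwards [ae_restrict_of_ae (μ := volume) (s := Set.Icc x y) haneg,
        ae_restrict_of_ae (μ := volume) (s := Set.Icc x y) hwae,
        ae_restrict_of_ae (μ := volume) (s := Set.Icc x y) hae,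
        ae_restrict_mem measurableSet_Icc] with s h1 h2 h3 hmem
      have hIoo : s ∈ Set.Ioo x y := by
        constructor
        · rcases hmem.1.eq_or_lt with he | hl
          · exact absurd (by rw [← he]; exact Set.mem_insert x {y}) h3
          · exact hl
        · rcases hmem.2.eq_or_lt with he | hl
          · exact absurd (by rw [he]; exact Set.mem_insert_of_mem x rfl) h3
          · exact hl
      have hgap := hsub hIoo
      have ha : a s ≤ 0 := h1 hgap
      have hw : w s = 0 := h2 hgap
      have : lam * a s * g (u s) ≤ 0 :=
        mul_nonpos_of_nonpos_of_nonneg (mul_nonpos_of_nonneg_of_nonpos hlampos.le ha) (hgu s)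
      simp only [hWdef, hw]
      linarith
    have h0 : 0 ≤ ∫ s in x..y, -W s := by
      apply intervalIntegral.integral_nonneg_of_ae_restrict hxy
      filter_upwards [hW] with s hs
      simpa using neg_nonneg.mpr hs
    rw [intervalIntegral.integral_neg] at h0
    have := hvdiff x y
    linarith
  -- u is differentiable with derivative h(t, v t)
  have hhv_cont : Continuous fun s => h s (v s) :=
    hhc.comp (continuous_id.prodMk hvc)
  have hderiv : ∀ t : ℝ, HasDerivAt u (h t (v t)) t := by
    intro t
    have H := intervalIntegral.integral_hasDerivAt_right (hFint 0 t)
      (hhv_cont.stronglyMeasurableAtFilter _ _) hhv_cont.continuousAt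
    have H2 := H.const_add (u 0)
    apply H2.congr_of_eventuallyEq
    exact Eventually.of_forall fun x => hueq x
  -- at any point where u attains the maximum R, v vanishes
  have hvz : ∀ t : ℝ, u t = R → v t = 0 := by
    intro t ht
    have hmax : IsLocalMax u t := Eventually.of_forall fun s => by
      rw [ht]; exact huR s
    have h0 : h t (v t) = 0 := hmax.hasDerivAt_eq_zero (hderiv t)
    apply (hh1 t).injective
    rw [hh0 t, h0]
  -- the maximum is attained inside some J_n
  have hloc : ∃ n : Fin (N + 1), ∃ t0, t0 ∈ Set.Icc (σ n) (τ n) ∧ u t0 = R := by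
    obtain ⟨tm, htm⟩ := huRmax
    obtain ⟨t₂, ht₂mem, ht₂⟩ := hup.exists_mem_Ico hT tm (σ 0)
    set M : Set ℝ := Set.Icc (σ 0) (σ 0 + T) ∩ {t | u t = R} with hMdef
    have hMcomp : IsCompact M :=
      isCompact_Icc.inter_right (isClosed_eq huc continuous_const)
    have hMne : M.Nonempty := ⟨t₂, ⟨ht₂mem.1, ht₂mem.2.le⟩, by
      simp only [Set.mem_setOf_eq]; rw [← ht₂, htm]⟩
    set tmax : ℝ := sSup M with htmaxdef
    have htM : tmax ∈ M := hMcomp.sSup_mem hMne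
    have hutmax : u tmax = R := htM.2
    by_cases hend : tmax = σ 0 + T
    · refine ⟨0, σ 0, ⟨le_refl _, (hσ 0).le⟩, ?_⟩
      have := hup (σ 0)
      rw [← this, ← hend, hutmax]
    by_cases hJ : tmax ∈ ⋃ n, Set.Icc (σ n) (τ n)
    · obtain ⟨n, hn⟩ := Set.mem_iUnion.mp hJ
      exact ⟨n, tmax, hn, hutmax⟩
    · exfalso
      have htlt : tmax < σ 0 + T := lt_of_le_of_ne htM.1.2 hend
      have hUc : IsClosed (⋃ n, Set.Icc (σ n) (τ n)) :=
        isClosed_iUnion_of_finite fun n => isClosed_Icc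
      obtain ⟨ε₁, hε₁pos, hball⟩ := Metric.isOpen_iff.mp hUc.isOpen_compl tmax hJ
      set ε : ℝ := min (ε₁ / 2) ((σ 0 + T - tmax) / 2) with hεdef
      have hεpos : 0 < ε := lt_min (by linarith) (by linarith)
      have hsub : Set.Ioo tmax (tmax + ε) ⊆
          Set.Ico (σ 0) (σ 0 + T) \ (⋃ n, Set.Icc (σ n) (τ n)) := by
        intro s hs
        constructor
        · constructor
          · exact le_trans htM.1.1 hs.1.le
          · have : ε ≤ (σ 0 + T - tmax) / 2 := min_le_right _ _
            have := hs.2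
            linarith
        · apply hball
          simp only [Metric.mem_ball, Real.dist_eq]
          have : ε ≤ ε₁ / 2 := min_le_left _ _
          rw [abs_of_pos (by linarith [hs.1] : 0 < s - tmax)]
          linarith [hs.2]
      have hvpos : ∀ s ∈ Set.Icc tmax (tmax + ε), 0 ≤ v s := by
        intro s hs
        rcases hs.1.eq_or_lt with he | hl
        · rw [← he, hvz tmax hutmax]
        · have : v tmax ≤ v s := by
            apply hv_gap tmax s hs.1
            intro x hx
            exact hsub ⟨hx.1, lt_of_lt_of_le hx.2 hs.2⟩
          rw [hvz tmax hutmax] at this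
          exact this
      have hint : 0 ≤ ∫ s in tmax..(tmax + ε), h s (v s) := by
        apply intervalIntegral.integral_nonneg (by linarith : tmax ≤ tmax + ε)
        intro s hs
        have := (hh1 s).monotone (hvpos s hs)
        rwa [hh0 s] at this
      have hudd := hudiff tmax (tmax + ε)
      have huge : R ≤ u (tmax + ε) := by rw [← hutmax]; linarith
      have humem : tmax + ε ∈ M := by
        constructor
        · constructor
          · linarith [htM.1.1]
          · have : ε ≤ (σ 0 + T - tmax) / 2 := min_le_right _ _
            linarith
        · exact le_antisymm (huR _) huge
      have : tmax + ε ≤ tmax := le_csSup hMcomp.bddAbove humem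
      linarith
  obtain ⟨n, t0, ht0mem, ht0R⟩ := hloc
  have hvt0 : v t0 = 0 := hvz t0 ht0R
  have hδn : δ ≤ τ n - σ n := hδle n
  -- claim V1 : v < 1 on [σ n + δ/4, τ n]
  have V1 : ∀ t, σ n + δ / 4 ≤ t → t ≤ τ n → v t < 1 := by
    intro t h1 h2
    by_contra hv1
    push_neg at hv1
    have hσt : σ n ≤ t := by linarith
    have hrise : ∀ s ∈ Set.Icc (σ n) t, (fun _ => c₂) s ≤ h s (v s) := by
      intro s hs
      have hvs : v t ≤ v s := hv_mono_J n s t hs.1 hs.2 h2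
      calc c₂ ≤ h s 1 := hc₂all s
      _ ≤ h s (v s) := (hh1 s).monotone (le_trans hv1 hvs)
    have hint := intervalIntegral.integral_mono_on hσt
      (intervalIntegrable_const) (hFint (σ n) t) hrise
    rw [intervalIntegral.integral_const, smul_eq_mul] at hint
    have hudd := hudiff (σ n) t
    have h3 : c₂ * (δ / 4) ≤ (t - σ n) * c₂ := by
      rw [mul_comm c₂ (δ / 4)]
      exact mul_le_mul_of_nonneg_right (by linarith) hc₂pos.le
    have h4 : u t - u (σ n) ≤ R := by linarith [hu0 (σ n), huR t]
    have h5 : R < c₂ * δ / 4 := hRc₂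
    have h6 : c₂ * (δ / 4) = c₂ * δ / 4 := by ring
    linarith
  -- claim V2 : v > -1 on [σ n, τ n - δ/4]
  have V2 : ∀ t, σ n ≤ t → t ≤ τ n - δ / 4 → -1 < v t := by
    intro t h1 h2
    by_contra hv1
    push_neg at hv1
    have htτ : t ≤ τ n := by linarith
    have hfall : ∀ s ∈ Set.Icc t (τ n), h s (v s) ≤ (fun _ => -c₁) s := by
      intro s hs
      have hvs : v s ≤ v t := hv_mono_J n t s h1 hs.1 hs.2
      calc h s (v s) ≤ h s (-1) := (hh1 s).monotone (le_trans hvs hv1)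
      _ ≤ -c₁ := hc₁all s
    have hint := intervalIntegral.integral_mono_on htτ
      (hFint t (τ n)) (intervalIntegrable_const) hfall
    rw [intervalIntegral.integral_const, smul_eq_mul] at hint
    have hudd := hudiff t (τ n)
    have h3 : c₁ * (δ / 4) ≤ (τ n - t) * c₁ := by
      rw [mul_comm c₁ (δ / 4)]
      exact mul_le_mul_of_nonneg_right (by linarith) hc₁pos.le
    have h4 : 0 ≤ u (τ n) := hu0 (τ n)
    have h5 : u t ≤ R := huR t
    have h6 : c₁ * (δ / 4) = c₁ * δ / 4 := by ring
    have h7 : (τ n - t) * -c₁ = -((τ n - t) * c₁) := by ring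
    rw [h7, ← hudd] at hint
    linarith [hRc₁]
  -- the key drop estimate on an interval I = [x, x+ρ] ⊆ J_n where u ≥ R/2
  have hdrop : ∀ x, σ n ≤ x → x + ρ ≤ τ n →
      (∀ s ∈ Set.Icc x (x + ρ), R / 2 ≤ u s) → 1 < v x - v (x + ρ) := by
    intro x hx hxρ hhalf
    have hWlow : ∀ᵐ s ∂(volume.restrict (Set.Icc x (x + ρ))),
        (fun s => lam * m * a s) s ≤ W s := by
      filter_upwards [ae_restrict_of_ae (μ := volume) (s := Set.Icc x (x + ρ)) (hapos n),
        ae_restrict_mem measurableSet_Icc] with s hs hmem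
      have ha : 0 < a s := hs ⟨le_trans hx hmem.1, le_trans hmem.2 hxρ⟩
      have hgm : m ≤ g (u s) := hmle (u s) ⟨hhalf s hmem, huR s⟩
      have h1 : lam * m * a s ≤ lam * a s * g (u s) := by
        have := mul_le_mul_of_nonneg_left hgm (mul_nonneg hlampos.le ha.le)
        calc lam * m * a s = lam * a s * m := by ring
        _ ≤ lam * a s * g (u s) := this
      have h2 : 0 ≤ α * w s := mul_nonneg hα (hw0 s)
      simp only [hWdef]
      linarith
    have hint := intervalIntegral.integral_mono_ae_restrict (by linarith : x ≤ x + ρ)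
      ((haInt x (x + ρ)).const_mul (lam * m)) (hWint x (x + ρ)) hWlow
    rw [intervalIntegral.integral_const_mul] at hint
    have hAx : Astar ≤ ∫ s in x..(x + ρ), a s := hAstarle n x ⟨hx, by linarith⟩
    have hvd := hvdiff x (x + ρ)
    have h9 : lam * (m * Astar) ≤ lam * m * ∫ s in x..(x + ρ), a s := by
      have := mul_le_mul_of_nonneg_left hAx (mul_nonneg hlampos.le hmpos.le)
      calc lam * (m * Astar) = lam * m * Astar := by ring
      _ ≤ lam * m * ∫ s in x..(x + ρ), a s := this
    linarith
  by_cases hcase : t0 ≤ τ n - δ / 4 - ρ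
  · -- case A : use the interval [t0, t0 + ρ]
    have hhalf : ∀ s ∈ Set.Icc t0 (t0 + ρ), R / 2 ≤ u s := by
      intro s hs
      have hlow : ∀ r ∈ Set.Icc t0 s, (fun _ => -H₀) r ≤ h r (v r) := by
        intro r hr
        have hv2 : -1 < v r := V2 r (le_trans ht0mem.1 hr.1)
          (by linarith [hr.2, hs.2])
        calc (-H₀ : ℝ) ≤ h r (-1) := hH₀2 r
        _ ≤ h r (v r) := (hh1 r).monotone hv2.le
      have hint := intervalIntegral.integral_mono_on hs.1
        (intervalIntegrable_const) (hFint t0 s) hlow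
      rw [intervalIntegral.integral_const, smul_eq_mul] at hint
      have hudd := hudiff t0 s
      have h1 : -(H₀ * ρ) ≤ (s - t0) * -H₀ := by
        have h2 : (s - t0) * H₀ ≤ ρ * H₀ :=
          mul_le_mul_of_nonneg_right (by linarith [hs.1, hs.2]) hH₀pos.le
        have h3 : (s - t0) * -H₀ = -((s - t0) * H₀) := by ring
        have h4 : ρ * H₀ = H₀ * ρ := by ring
        rw [h3]; linarith
      rw [ht0R] at hudd
      linarith
    have h1 := hdrop t0 ht0mem.1 (by linarith) hhalf
    have h2 : -1 < v (t0 + ρ) := V2 (t0 + ρ) (by linarith [ht0mem.1]) (by linarith)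
    rw [hvt0] at h1
    linarith
  · -- case B : use the interval [t0 - ρ, t0]
    push_neg at hcase
    have hlb : σ n + δ / 4 ≤ t0 - ρ := by linarith
    have hhalf : ∀ s ∈ Set.Icc (t0 - ρ) t0, R / 2 ≤ u s := by
      intro s hs
      have hup' : ∀ r ∈ Set.Icc s t0, h r (v r) ≤ (fun _ => H₀) r := by
        intro r hr
        have hv1 : v r < 1 := V1 r (by linarith [hs.1, hr.1])
          (le_trans hr.2 ht0mem.2)
        calc h r (v r) ≤ h r 1 := (hh1 r).monotone hv1.le
        _ ≤ H₀ := hH₀1 r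
      have hint := intervalIntegral.integral_mono_on hs.2
        (hFint s t0) (intervalIntegrable_const) hup'
      rw [intervalIntegral.integral_const, smul_eq_mul] at hint
      have hudd := hudiff s t0
      have h1 : (t0 - s) * H₀ ≤ H₀ * ρ := by
        have h2 : (t0 - s) * H₀ ≤ ρ * H₀ :=
          mul_le_mul_of_nonneg_right (by linarith [hs.1, hs.2]) hH₀pos.le
        linarith [show ρ * H₀ = H₀ * ρ by ring]
      rw [ht0R] at hudd
      linarith
    have h1 := hdrop (t0 - ρ) (by linarith) (by linarith [ht0mem.2])
      (by intro s hs; exact hhalf s (by simpa using hs))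
    have h2 : v (t0 - ρ) < 1 := V1 (t0 - ρ) hlb (by linarith [ht0mem.2])
    rw [show t0 - ρ + ρ = t0 by ring, hvt0] at h1
    linarith
end
end

section
/- Let T > 0. Let h : ℝ × ℝ → ℝ be continuous, T-periodic in the first variable, and satisfy (h0) and (h1). Let a : ℝ → ℝ be a locally integrable T-periodic function satisfying (a*), with positivity intervals J₁, …, J_N. Let g : [0,+∞) → [0,+∞) be continuous, satisfy (g*), and satisfy the superlinearity-at-infinity condition: for every K ∈ ℝ \ {0}, lim_{s→+∞} sign(K) · h(t, K g(s))/s = +∞ uniformly in t ∈ ℝ. Then for every λ > 0 there exists R > 0 such that for every α ≥ 0 and every non-negative locally integrable T-periodic function w vanishing a.e. on the complement of J₁ ∪ … ∪ J_N in a period, there is no T-periodic solution (u,v) of the system u' = h(t,v), v' = -λ a(t) g(u) - α w(t) with 0 ≤ u(t) ≤ max_τ u(τ) = R for all t ∈ ℝ. -/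
open MeasureTheory Set Filter

noncomputable section

/-- Reflections preserve interval integrability. -/
lemma refl_int {f : ℝ → ℝ} (hf : ∀ a b : ℝ, IntervalIntegrable f volume a b) (c : ℝ)
    (a b : ℝ) : IntervalIntegrable (fun x => f (c - x)) volume a b := by
  have := (hf (c - b) (c - a)).comp_sub_left c
  simpa using this.symm

lemma key_lemma (δ A lam alf S₀ C R : ℝ) (p q t' : ℝ)
    (H : ℝ → ℝ → ℝ) (a w u v g : ℝ → ℝ)
    (hδ : 0 < δ) (hlam : 0 < lam) (half : 0 ≤ alf)
    (hS₀ : 1 ≤ S₀) (hC0 : 0 ≤ C)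
    (hS₀R : S₀ ≤ R) (hRC : δ / 4 * C < R - S₀)
    (Hmono : ∀ t : ℝ, Monotone (H t)) (H0 : ∀ t : ℝ, H t 0 = 0)
    (hu_c : Continuous u)
    (hg : ContinuousOn g (Set.Ici 0)) (hgnn : ∀ x : ℝ, 0 ≤ x → 0 ≤ g x)
    (hu0 : ∀ t, 0 ≤ u t) (hw : ∀ t, 0 ≤ w t)
    (Hint : ∀ t₁ t₂ : ℝ, IntervalIntegrable (fun s => H s (v s)) volume t₁ t₂)
    (aguint : ∀ t₁ t₂ : ℝ, IntervalIntegrable (fun s => a s * g (u s)) volume t₁ t₂)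
    (wint : ∀ t₁ t₂ : ℝ, IntervalIntegrable w volume t₁ t₂)
    (aint : ∀ t₁ t₂ : ℝ, IntervalIntegrable a volume t₁ t₂)
    (udiff : ∀ t₁ t₂ : ℝ, u t₂ - u t₁ = ∫ s in t₁..t₂, H s (v s))
    (vdiff : ∀ t₁ t₂ : ℝ, v t₂ - v t₁ = ∫ s in t₁..t₂, -(lam * (a s * g (u s)) + alf * w s))
    (hapos : ∀ᵐ x ∂volume, x ∈ Set.Icc p q → 0 < a x)
    (hAint : ∀ x : ℝ, p ≤ x → x + δ / 4 ≤ q → A ≤ ∫ s in x..x + δ / 4, a s)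
    (hsup1 : ∀ s : ℝ, S₀ ≤ s → ∀ t : ℝ, H t (-(lam * A * g s)) ≤ -(8 / δ * s))
    (hCb : ∀ t y : ℝ, -(lam * A * g S₀) ≤ y → y ≤ 0 → -(H t y) ≤ C)
    (hpt' : p ≤ t') (ht'q : t' + δ / 2 ≤ q)
    (huR : u t' = R) (hvt' : v t' = 0) : False := by
  have hδ4 : 0 < δ / 4 := by linarith
  set t₁ := t' + δ / 4 with ht₁def
  have ht't₁ : t' ≤ t₁ := by simp [ht₁def]; linarith
  have ht₁q : t₁ ≤ q := by simp [ht₁def]; linarith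
  have hpq : p ≤ q := hpt'.trans (by linarith)
  have gu_nn : ∀ s : ℝ, 0 ≤ g (u s) := fun s => hgnn _ (hu0 s)
  -- integrability of the combined integrand
  have Gint : ∀ t₁ t₂ : ℝ, IntervalIntegrable
      (fun s => lam * (a s * g (u s)) + alf * w s) volume t₁ t₂ := fun t₁ t₂ =>
    ((aguint t₁ t₂).const_mul lam).add ((wint t₁ t₂).const_mul alf)
  -- v is nonincreasing on [p, q]
  have vmono : ∀ s t : ℝ, p ≤ s → s ≤ t → t ≤ q → v t ≤ v s := by
    intro s t hps hst htq
    have hae : 0 ≤ᵐ[volume.restrict (Set.Icc s t)]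
        fun x => lam * (a x * g (u x)) + alf * w x := by
      rw [Filter.EventuallyLE, MeasureTheory.ae_restrict_iff' measurableSet_Icc]
      filter_upwards [hapos] with x hx hxst
      have hax : 0 < a x := hx ⟨hps.trans hxst.1, hxst.2.trans htq⟩
      have : 0 ≤ a x * g (u x) := mul_nonneg hax.le (gu_nn x)
      have : 0 ≤ lam * (a x * g (u x)) := mul_nonneg hlam.le this
      have : 0 ≤ alf * w x := mul_nonneg half (hw x)
      simp only [Pi.zero_apply]
      linarith
    have h1 : 0 ≤ ∫ x in s..t, (lam * (a x * g (u x)) + alf * w x) :=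
      intervalIntegral.integral_nonneg_of_ae_restrict hst hae
    have h2 := vdiff s t
    rw [intervalIntegral.integral_neg] at h2
    linarith
  have vle : ∀ t : ℝ, t' ≤ t → t ≤ q → v t ≤ 0 := by
    intro t h1 h2
    have := vmono t' t hpt' h1 h2
    linarith [hvt' ▸ this]
  -- u is nonincreasing on [t', q]
  have umono : ∀ s t : ℝ, t' ≤ s → s ≤ t → t ≤ q → u t ≤ u s := by
    intro s t h1 h2 h3
    have hle : ∀ x ∈ Set.Icc s t, H x (v x) ≤ (fun _ => (0:ℝ)) x := by
      intro x hx
      have : v x ≤ 0 := vle x (h1.trans hx.1) (hx.2.trans h3)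
      simpa [H0 x] using Hmono x this
    have := intervalIntegral.integral_mono_on h2 (Hint s t)
      intervalIntegrable_const hle
    have h4 := udiff s t
    simp only [intervalIntegral.integral_const, smul_eq_mul, mul_zero] at this
    linarith
  -- minimum of g ∘ u on [t', t₁]
  have hcab : ContinuousOn (fun x => g (u x)) (Set.Icc t' t₁) :=
    hg.comp hu_c.continuousOn (fun x _ => hu0 x)
  obtain ⟨s₀, hs₀mem, hs₀min⟩ :=
    isCompact_Icc.exists_isMinOn (Set.nonempty_Icc.mpr ht't₁) hcab
  set r₀ := u s₀ with hr₀def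
  -- v t₁ ≤ -(lam * A * g r₀)
  have hint1 : ∫ x in t'..t₁, a x * g r₀ ≤ ∫ x in t'..t₁, a x * g (u x) := by
    apply intervalIntegral.integral_mono_ae_restrict ht't₁ ((aint t' t₁).mul_const _)
      (aguint t' t₁)
    rw [Filter.EventuallyLE, MeasureTheory.ae_restrict_iff' measurableSet_Icc]
    filter_upwards [hapos] with x hx hxst
    have hax : 0 < a x := hx ⟨hpt'.trans hxst.1, hxst.2.trans ht₁q⟩
    exact mul_le_mul_of_nonneg_left (hs₀min hxst) hax.le
  have hAr : A * g r₀ ≤ ∫ x in t'..t₁, a x * g (u x) := by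
    have h5 : A ≤ ∫ s in t'..t₁, a s := hAint t' hpt' (by linarith)
    calc A * g r₀ ≤ (∫ x in t'..t₁, a x) * g r₀ :=
          mul_le_mul_of_nonneg_right h5 (gu_nn s₀)
      _ = ∫ x in t'..t₁, a x * g r₀ := (intervalIntegral.integral_mul_const _ _).symm
      _ ≤ _ := hint1
  have hv_t₁ : v t₁ ≤ -(lam * A * g r₀) := by
    have h2 := vdiff t' t₁
    rw [hvt', sub_zero, intervalIntegral.integral_neg] at h2
    rw [intervalIntegral.integral_add ((aguint t' t₁).const_mul lam)
      ((wint t' t₁).const_mul alf), intervalIntegral.integral_const_mul,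
      intervalIntegral.integral_const_mul] at h2
    have hw0 : 0 ≤ ∫ x in t'..t₁, w x :=
      intervalIntegral.integral_nonneg ht't₁ (fun x _ => hw x)
    have h6 : lam * (A * g r₀) ≤ lam * ∫ x in t'..t₁, a x * g (u x) :=
      mul_le_mul_of_nonneg_left (by linarith [hAr]) hlam.le
    have h7 : 0 ≤ alf * ∫ x in t'..t₁, w x := mul_nonneg half hw0
    have : v t₁ = -(lam * (∫ x in t'..t₁, a x * g (u x)) + alf * ∫ x in t'..t₁, w x) := h2
    rw [this]
    have : lam * A * g r₀ = lam * (A * g r₀) := by ring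
    rw [this]
    linarith
  by_cases hcase : S₀ ≤ u t₁
  · -- u stays above S₀ on [t', t₁]
    have hr₀S : S₀ ≤ r₀ := hcase.trans (umono s₀ t₁ hs₀mem.1 hs₀mem.2 ht₁q)
    have hr₀pos : 0 < r₀ := by linarith
    have hbound : ∀ x ∈ Set.Icc t₁ q, H x (v x) ≤ (fun _ => -(8 / δ * r₀)) x := by
      intro x hx
      have hvx : v x ≤ -(lam * A * g r₀) :=
        (vmono t₁ x (hpt'.trans ht't₁) hx.1 hx.2).trans hv_t₁
      exact (Hmono x hvx).trans (hsup1 r₀ hr₀S x)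
    have hiq : u q - u t₁ ≤ (q - t₁) * (-(8 / δ * r₀)) := by
      rw [udiff]
      have := intervalIntegral.integral_mono_on ht₁q (Hint t₁ q)
        intervalIntegrable_const hbound
      rw [intervalIntegral.integral_const, smul_eq_mul] at this
      linarith
    have hId : δ / 4 * (8 / δ * r₀) = 2 * r₀ := by field_simp; ring
    have hut₁ : u t₁ ≤ r₀ := umono s₀ t₁ hs₀mem.1 hs₀mem.2 ht₁q
    have hqd : δ / 4 ≤ q - t₁ := by simp [ht₁def]; linarith
    have h8 : δ / 4 * (8 / δ * r₀) ≤ (q - t₁) * (8 / δ * r₀) :=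
      mul_le_mul_of_nonneg_right hqd (by positivity)
    have := hu0 q
    nlinarith
  · push_neg at hcase
    have hIVT := intermediate_value_Icc' ht't₁ (hu_c.continuousOn (s := Set.Icc t' t₁))
    have hS₀mem : S₀ ∈ Set.Icc (u t₁) (u t') := ⟨hcase.le, huR ▸ hS₀R⟩
    obtain ⟨ts, htsmem, hts⟩ := hIVT hS₀mem
    have htsq : ts ≤ q := htsmem.2.trans ht₁q
    have hvts0 : v ts ≤ 0 := vle ts htsmem.1 htsq
    by_cases hB : -(lam * A * g S₀) ≤ v ts
    · -- contradiction with the choice of R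
      have hptw : ∀ x ∈ Set.Icc t' ts, (fun _ => -C) x ≤ H x (v x) := by
        intro x hx
        have h9 : v ts ≤ v x := vmono x ts (hpt'.trans hx.1) hx.2 htsq
        have h10 : H x (v ts) ≤ H x (v x) := Hmono x h9
        have h11 : -(H x (v ts)) ≤ C := hCb x (v ts) hB hvts0
        simp only
        linarith
      have h12 : (ts - t') * (-C) ≤ u ts - u t' := by
        rw [udiff]
        have := intervalIntegral.integral_mono_on htsmem.1 intervalIntegrable_const
          (Hint t' ts) hptw
        rw [intervalIntegral.integral_const, smul_eq_mul] at this
        linarith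
      rw [hts, huR] at h12
      have h13 : (ts - t') * C ≤ δ / 4 * C := by
        apply mul_le_mul_of_nonneg_right _ hC0
        have := htsmem.2
        simp [ht₁def] at this
        linarith [htsmem.1, this]
      nlinarith
    · push_neg at hB
      have hbound : ∀ x ∈ Set.Icc ts q, H x (v x) ≤ (fun _ => -(8 / δ * S₀)) x := by
        intro x hx
        have hvx : v x ≤ v ts := vmono ts x (hpt'.trans htsmem.1) hx.1 hx.2
        have : H x (v x) ≤ H x (-(lam * A * g S₀)) := Hmono x (by linarith)
        exact this.trans (hsup1 S₀ le_rfl x)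
      have hiq : u q - u ts ≤ (q - ts) * (-(8 / δ * S₀)) := by
        rw [udiff]
        have := intervalIntegral.integral_mono_on htsq (Hint ts q)
          intervalIntegrable_const hbound
        rw [intervalIntegral.integral_const, smul_eq_mul] at this
        linarith
      have hId : δ / 4 * (8 / δ * S₀) = 2 * S₀ := by field_simp; ring
      have hqd : δ / 4 ≤ q - ts := by
        have := htsmem.2
        simp [ht₁def] at this
        linarith
      have h8 : δ / 4 * (8 / δ * S₀) ≤ (q - ts) * (8 / δ * S₀) :=
        mul_le_mul_of_nonneg_right hqd (by positivity)
      have := hu0 q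
      nlinarith [hts]

theorem statement10
    (T : ℝ) (hT : 0 < T)
    (h : ℝ → ℝ → ℝ) (hhc : Continuous (Function.uncurry h))
    (hhper : ∀ t s : ℝ, h (t + T) s = h t s)
    (hh0 : ∀ t : ℝ, h t 0 = 0)
    (hh1 : ∀ t : ℝ, StrictMono (h t))
    (a : ℝ → ℝ) (haloc : LocallyIntegrable a volume)
    (haper : Function.Periodic a T)
    (N : ℕ) (σ τ : Fin (N + 1) → ℝ) (hstar : SignChanging T a N σ τ)
    (g : ℝ → ℝ) (hgc : ContinuousOn g (Set.Ici 0))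
    (hg0 : g 0 = 0) (hgpos : ∀ s : ℝ, 0 < s → 0 < g s)
    (hinf : ∀ K : ℝ, K ≠ 0 → ∀ M : ℝ, ∀ᶠ s in Filter.atTop,
      ∀ t : ℝ, M ≤ Real.sign K * (h t (K * g s) / s)) :
    ∀ lam : ℝ, 0 < lam →
      ∃ R : ℝ, 0 < R ∧ ∀ α : ℝ, 0 ≤ α → ∀ w : ℝ → ℝ,
        (∀ t, 0 ≤ w t) → LocallyIntegrable w volume → Function.Periodic w T →
        (∀ᵐ t ∂volume,
          t ∈ Set.Ico (σ 0) (σ 0 + T) \ (⋃ n, Set.Icc (σ n) (τ n)) → w t = 0) →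
        ¬ ∃ u v : ℝ → ℝ,
          IsPeriodicSol T h (fun t x => -(lam * a t * g x + α * w t)) u v ∧
          (∀ t, 0 ≤ u t) ∧ (∀ t, u t ≤ R) ∧ (∃ t, u t = R) := by
  obtain ⟨hστ, hsep, hτT, hapos0, haneg⟩ := hstar
  intro lam hlam
  have hgnn : ∀ x : ℝ, 0 ≤ x → 0 ≤ g x := by
    intro x hx
    rcases hx.eq_or_lt with h' | h'
    · rw [← h', hg0]
    · exact (hgpos x h').le
  -- the minimal interval length δ
  set δ : ℝ := Finset.univ.inf' Finset.univ_nonempty (fun n => τ n - σ n) with hδdef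
  have hδle : ∀ n, δ ≤ τ n - σ n := fun n => Finset.inf'_le _ (Finset.mem_univ n)
  have hδpos : 0 < δ := by
    obtain ⟨m, -, hm⟩ := Finset.exists_mem_eq_inf' Finset.univ_nonempty (fun n => τ n - σ n)
    rw [hδdef, hm]
    have := hστ m
    linarith
  have hδ4 : 0 < δ / 4 := by linarith
  -- interval integrability of a
  have aint : ∀ s t : ℝ, IntervalIntegrable a volume s t := fun s t =>
    (haloc.integrableOn_isCompact isCompact_uIcc).intervalIntegrable
  -- the sliding-window primitive φ and its positive lower bound A on the J intervals
  have hprim : Continuous (fun x : ℝ => ∫ s in (0:ℝ)..x, a s) :=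
    intervalIntegral.continuous_primitive (fun s t => aint s t) 0
  set φ : ℝ → ℝ := fun x => ∫ s in x..(x + δ/4), a s with hφdef
  have hφc : Continuous φ := by
    have hfe : φ = fun x => (∫ s in (0:ℝ)..(x + δ/4), a s) - ∫ s in (0:ℝ)..x, a s := by
      funext x
      exact (intervalIntegral.integral_interval_sub_left (aint 0 (x + δ/4)) (aint 0 x)).symm
    rw [hfe]
    exact (hprim.comp (continuous_id.add continuous_const)).sub hprim
  have hφpos : ∀ n : Fin (N+1), ∀ x ∈ Set.Icc (σ n) (τ n - δ/4), 0 < φ x := by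
    intro n x hx
    have hxx : x < x + δ/4 := by linarith
    have hsub : Set.Ioc x (x + δ/4) ⊆ Set.Icc (σ n) (τ n) := fun y hy =>
      ⟨hx.1.trans hy.1.le, hy.2.trans (by linarith [hx.2])⟩
    have hf : 0 ≤ᵐ[volume.restrict (Set.uIoc x (x + δ/4))] a := by
      rw [Set.uIoc_of_le hxx.le, Filter.EventuallyLE,
        MeasureTheory.ae_restrict_iff' measurableSet_Ioc]
      filter_upwards [hapos0 n] with t ht hmem
      exact (ht (hsub hmem)).le
    rw [show φ x = ∫ s in x..(x + δ/4), a s from rfl,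
      intervalIntegral.integral_pos_iff_support_of_nonneg_ae' hf (aint _ _)]
    refine ⟨hxx, ?_⟩
    have hmono : volume (Set.Ioc x (x + δ/4)) ≤
        volume (Function.support a ∩ Set.Ioc x (x + δ/4)) := by
      apply measure_mono_ae
      filter_upwards [hapos0 n] with t ht hmem
      exact ⟨(ht (hsub hmem)).ne', hmem⟩
    have hIoc : (0:ENNReal) < volume (Set.Ioc x (x + δ/4)) := by
      rw [Real.volume_Ioc]
      exact ENNReal.ofReal_pos.mpr (by linarith)
    exact lt_of_lt_of_le hIoc hmono
  have hAn : ∀ n : Fin (N+1), ∃ An : ℝ, 0 < An ∧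
      ∀ x ∈ Set.Icc (σ n) (τ n - δ/4), An ≤ φ x := by
    intro n
    have hne : (Set.Icc (σ n) (τ n - δ/4)).Nonempty :=
      Set.nonempty_Icc.mpr (by linarith [hδle n])
    obtain ⟨x₀, hx₀, hmin⟩ := isCompact_Icc.exists_isMinOn hne hφc.continuousOn
    exact ⟨φ x₀, hφpos n x₀ hx₀, fun x hx => hmin hx⟩
  choose An hAnpos hAnle using hAn
  set A : ℝ := Finset.univ.inf' Finset.univ_nonempty An with hAdef
  have hAle : ∀ n, A ≤ An n := fun n => Finset.inf'_le _ (Finset.mem_univ n)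
  have hApos : 0 < A := by
    obtain ⟨m, -, hm⟩ := Finset.exists_mem_eq_inf' Finset.univ_nonempty An
    rw [hAdef, hm]
    exact hAnpos m
  have hKpos : 0 < lam * A := mul_pos hlam hApos
  -- the superlinearity constants
  have e1 := ((hinf (lam * A) (ne_of_gt hKpos) (8/δ)).and
    ((hinf (-(lam * A)) (by simpa using ne_of_gt hKpos) (8/δ)).and
      (eventually_ge_atTop (1:ℝ))))
  rw [Filter.eventually_atTop] at e1
  obtain ⟨m₀, hm₀⟩ := e1
  set S₀ : ℝ := max m₀ 1 with hS₀def
  have hS₀1 : (1:ℝ) ≤ S₀ := le_max_right _ _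
  have hsupP : ∀ s : ℝ, S₀ ≤ s → ∀ t : ℝ, 8/δ * s ≤ h t (lam * A * g s) := by
    intro s hs t
    obtain ⟨h1, -, h3⟩ := hm₀ s ((le_max_left _ _).trans hs)
    have hspos : (0:ℝ) < s := by linarith
    have h4 := h1 t
    rw [Real.sign_of_pos hKpos, one_mul, le_div_iff₀ hspos] at h4
    linarith
  have hsupN : ∀ s : ℝ, S₀ ≤ s → ∀ t : ℝ, h t (-(lam * A * g s)) ≤ -(8/δ * s) := by
    intro s hs t
    obtain ⟨-, h2, h3⟩ := hm₀ s ((le_max_left _ _).trans hs)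
    have hspos : (0:ℝ) < s := by linarith
    have h4 := h2 t
    rw [Real.sign_of_neg (by simpa using hKpos)] at h4
    have hrw : -(lam * A) * g s = -(lam * A * g s) := by ring
    rw [hrw] at h4
    have h5 : h t (-(lam * A * g s)) / s ≤ -(8/δ) := by linarith
    rw [div_le_iff₀ hspos] at h5
    linarith
  -- the constant C bounding |h| on a compact region
  set B : ℝ := lam * A * g S₀ with hBdef
  have hB0 : 0 ≤ B := mul_nonneg hKpos.le (hgnn S₀ (by linarith))
  have habsc : Continuous fun pr : ℝ × ℝ => |h pr.1 pr.2| := by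
    have hfe : (fun pr : ℝ × ℝ => |h pr.1 pr.2|) = fun pr => |Function.uncurry h pr| := rfl
    rw [hfe]
    exact hhc.abs
  set C : ℝ := sSup ((fun pr : ℝ × ℝ => |h pr.1 pr.2|) ''
    ((Set.Icc 0 T) ×ˢ (Set.Icc (-B) B))) with hCdef
  have hbddC : BddAbove ((fun pr : ℝ × ℝ => |h pr.1 pr.2|) ''
      ((Set.Icc 0 T) ×ˢ (Set.Icc (-B) B))) :=
    ((isCompact_Icc.prod isCompact_Icc).image habsc).bddAbove
  have hCabs : ∀ t y : ℝ, |y| ≤ B → |h t y| ≤ C := by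
    intro t y hy
    have hyy : y ∈ Set.Icc (-B) B := abs_le.mp hy
    have hmem : toIcoMod hT 0 t ∈ Set.Icc (0:ℝ) T := by
      have h1 := toIcoMod_mem_Ico hT 0 t
      rw [zero_add] at h1
      exact ⟨h1.1, h1.2.le⟩
    have hper' : Function.Periodic (fun x => h x y) T := fun x => hhper x y
    have heq : h (toIcoMod hT 0 t) y = h t y := by
      rw [toIcoMod]
      exact hper'.sub_zsmul_eq _
    rw [← heq]
    exact le_csSup hbddC ⟨(toIcoMod hT 0 t, y), ⟨hmem, hyy⟩, rfl⟩
  have hC0 : 0 ≤ C := (abs_nonneg (h 0 0)).trans (hCabs 0 0 (by simpa using hB0))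
  -- the radius R
  set R : ℝ := S₀ + δ/4 * (C + 1) with hRdef
  have hCpos : (0:ℝ) < C + 1 := by linarith
  have hRpos : 0 < R := by rw [hRdef]; nlinarith [mul_pos hδ4 hCpos]
  have hRge : S₀ ≤ R := by rw [hRdef]; nlinarith [mul_pos hδ4 hCpos]
  have hRC : δ/4 * C < R - S₀ := by rw [hRdef]; nlinarith [hδ4]
  refine ⟨R, hRpos, ?_⟩
  intro α hα w hw hwloc hwper hwz
  rintro ⟨u, v, ⟨huc, hvc, huper, hvper, hFi, hGi, hueq, hveq⟩, hu0, huRle, t₀, hut₀⟩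
  simp only [] at hGi hveq
  have wint : ∀ s t : ℝ, IntervalIntegrable w volume s t := fun s t =>
    (hwloc.integrableOn_isCompact isCompact_uIcc).intervalIntegrable
  have hguc : Continuous fun x => g (u x) := hgc.comp_continuous huc hu0
  have aguint : ∀ s t : ℝ, IntervalIntegrable (fun x => a x * g (u x)) volume s t :=
    fun s t => (aint s t).mul_continuousOn hguc.continuousOn
  have hGfun : (fun s => -(lam * a s * g (u s) + α * w s)) =
      fun s => -(lam * (a s * g (u s)) + α * w s) := by
    funext s; ring
  have udiff : ∀ t₁ t₂ : ℝ, u t₂ - u t₁ = ∫ s in t₁..t₂, h s (v s) := by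
    intro t₁ t₂
    rw [hueq t₂, hueq t₁, add_sub_add_left_eq_sub]
    exact intervalIntegral.integral_interval_sub_left (hFi 0 t₂) (hFi 0 t₁)
  have vdiff : ∀ t₁ t₂ : ℝ, v t₂ - v t₁ =
      ∫ s in t₁..t₂, -(lam * (a s * g (u s)) + α * w s) := by
    intro t₁ t₂
    rw [← hGfun, hveq t₂, hveq t₁, add_sub_add_left_eq_sub]
    exact intervalIntegral.integral_interval_sub_left (hGi 0 t₂) (hGi 0 t₁)
  have hGi' : ∀ s t : ℝ, IntervalIntegrable
      (fun x => -(lam * (a x * g (u x)) + α * w x)) volume s t := by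
    intro s t
    rw [← hGfun]
    exact hGi s t
  have uderiv : ∀ t : ℝ, HasDerivAt u (h t (v t)) t := by
    intro t
    have hcont : Continuous fun s => h s (v s) := hhc.comp (continuous_id.prodMk hvc)
    have hder := intervalIntegral.integral_hasDerivAt_right (hFi 0 t)
      (hcont.stronglyMeasurableAtFilter _ _) hcont.continuousAt
    have h2 := hder.const_add (u 0)
    have hfun : u = fun t => u 0 + ∫ s in (0:ℝ)..t, h s (v s) := funext hueq
    nth_rewrite 1 [hfun]
    exact h2
  have hvmax : ∀ t : ℝ, u t = R → v t = 0 := by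
    intro t hmax
    have hloc : IsLocalMax u t :=
      Filter.Eventually.of_forall (fun s => by rw [hmax]; exact huRle s)
    have hz := hloc.hasDerivAt_eq_zero (uderiv t)
    have h2 : h t (v t) = h t 0 := by rw [hh0 t]; exact hz
    exact (hh1 t).injective h2
  -- normalize the maximum point into the basic period
  set tmax := toIcoMod hT (σ 0) t₀ with htmaxdef
  have htmaxIco : tmax ∈ Set.Ico (σ 0) (σ 0 + T) := toIcoMod_mem_Ico hT (σ 0) t₀
  have hutmax : u tmax = R := by
    rw [htmaxdef, toIcoMod, huper.sub_zsmul_eq]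
    exact hut₀
  -- first entry into the positivity region after tmax
  set SS : Set ℝ := ⋃ n, (Set.Icc (σ n) (τ n) ∪ Set.Icc (σ n + T) (τ n + T)) with hSSdef
  have hSSclosed : IsClosed SS :=
    isClosed_iUnion_of_finite fun n => isClosed_Icc.union isClosed_Icc
  set E : Set ℝ := SS ∩ Set.Ici tmax with hEdef
  have hσ0T : σ 0 + T ∈ E := by
    constructor
    · exact Set.mem_iUnion.mpr ⟨0, Or.inr ⟨le_refl _, by linarith [hστ 0]⟩⟩
    · exact htmaxIco.2.le
  have hEne : E.Nonempty := ⟨σ 0 + T, hσ0T⟩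
  have hEbdd : BddBelow E := ⟨tmax, fun x hx => hx.2⟩
  set t' := sInf E with ht'def
  have ht'mem : t' ∈ E := (hSSclosed.inter isClosed_Ici).csInf_mem hEne hEbdd
  have htmaxt' : tmax ≤ t' := ht'mem.2
  have ht'le : t' ≤ σ 0 + T := csInf_le hEbdd hσ0T
  have ht'min : ∀ x ∈ E, t' ≤ x := fun x hx => csInf_le hEbdd hx
  -- a ≤ 0 and w = 0 a.e. between tmax and t'
  have haew : ∀ᵐ x ∂volume,
      (x ∈ Set.Ico (σ 0) (σ 0 + T) \ ⋃ n, Set.Icc (σ n) (τ n) → a x ≤ 0 ∧ w x = 0) := by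
    filter_upwards [haneg, hwz] with x h1 h2 hx
    exact ⟨h1 hx, h2 hx⟩
  have haene : ∀ᵐ x : ℝ, x ≠ t' := by
    rw [MeasureTheory.ae_iff]
    have hset : {x : ℝ | ¬x ≠ t'} = {t'} := by ext x; simp
    rw [hset]
    exact measure_singleton t'
  have hvmono1 : ∀ s t : ℝ, tmax ≤ s → s ≤ t → t ≤ t' → v s ≤ v t := by
    intro s t h1 h2 h3
    have hae2 : 0 ≤ᵐ[volume.restrict (Set.Icc s t)]
        fun x => -(lam * (a x * g (u x)) + α * w x) := by
      rw [Filter.EventuallyLE, MeasureTheory.ae_restrict_iff' measurableSet_Icc]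
      filter_upwards [haew, haene] with x hx hxne hxst
      have hxlt : x < t' := lt_of_le_of_ne (hxst.2.trans h3) hxne
      have hxmem : x ∈ Set.Ico (σ 0) (σ 0 + T) :=
        ⟨htmaxIco.1.trans (h1.trans hxst.1), hxlt.trans_le ht'le⟩
      have hxnot : x ∉ ⋃ n, Set.Icc (σ n) (τ n) := by
        intro hmem
        obtain ⟨n, hn⟩ := Set.mem_iUnion.mp hmem
        have hxE : x ∈ E := ⟨Set.mem_iUnion.mpr ⟨n, Or.inl hn⟩, h1.trans hxst.1⟩
        exact absurd (ht'min x hxE) (not_le.mpr hxlt)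
      obtain ⟨ha0, hw0⟩ := hx ⟨hxmem, hxnot⟩
      have hag : a x * g (u x) ≤ 0 := mul_nonpos_of_nonpos_of_nonneg ha0 (hgnn _ (hu0 x))
      have hlag : lam * (a x * g (u x)) ≤ 0 := mul_nonpos_of_nonneg_of_nonpos hlam.le hag
      simp only [Pi.zero_apply, hw0, mul_zero, add_zero]
      linarith
    have h4 := vdiff s t
    have h5 := intervalIntegral.integral_nonneg_of_ae_restrict h2 hae2
    linarith
  have hvtmax : v tmax = 0 := hvmax tmax hutmax
  have hut' : u t' = R := by
    have hge : 0 ≤ ∫ x in tmax..t', h x (v x) := by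
      apply intervalIntegral.integral_nonneg htmaxt'
      intro x hx
      have h6 : 0 ≤ v x := by
        have h7 := hvmono1 tmax x le_rfl hx.1 hx.2
        linarith [hvtmax ▸ h7]
      calc (0:ℝ) = h x 0 := (hh0 x).symm
        _ ≤ h x (v x) := (hh1 x).monotone h6
    have h7 := udiff tmax t'
    have h8 := huRle t'
    linarith [hutmax ▸ h7]
  have hvt'0 : v t' = 0 := hvmax t' hut'
  -- the main blow-up step, applied on an interval [p, q] around t'
  have main : ∀ p q : ℝ, δ ≤ q - p → t' ∈ Set.Icc p q →
      (∀ᵐ x ∂volume, x ∈ Set.Icc p q → 0 < a x) →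
      (∀ x : ℝ, p ≤ x → x + δ/4 ≤ q → A ≤ ∫ s in x..(x + δ/4), a s) → False := by
    intro p q hlen ht'pq hapos hAq
    rcases le_or_gt (t' + δ/2) q with hfor | hback
    · -- forward in time
      refine key_lemma δ A lam α S₀ C R p q t' h a w u v g hδpos hlam hα hS₀1 hC0 hRge hRC
        (fun t => (hh1 t).monotone) hh0 huc hgc hgnn hu0 hw hFi aguint wint aint udiff vdiff
        hapos hAq hsupN ?_ ht'pq.1 hfor hut' hvt'0
      intro t y hy1 hy2
      have habs : |h t y| ≤ C := hCabs t y (abs_le.mpr ⟨hy1, hy2.trans hB0⟩)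
      linarith [neg_abs_le (h t y)]
    · -- backward in time: reflect
      set c : ℝ := p + q with hcdef
      have hp't : p + δ/2 ≤ t' := by linarith [ht'pq.2]
      refine key_lemma δ A lam α S₀ C R p q (c - t') (fun t y => -(h (c - t) (-y)))
        (fun t => a (c - t)) (fun t => w (c - t)) (fun t => u (c - t))
        (fun t => -(v (c - t))) g hδpos hlam hα hS₀1 hC0 hRge hRC
        ?_ ?_ ?_ hgc hgnn (fun t => hu0 _) (fun t => hw _) ?_ ?_ ?_ ?_ ?_ ?_ ?_ ?_ ?_ ?_ ?_ ?_ ?_ ?_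
      · -- monotone
        intro t y₁ y₂ hy
        exact neg_le_neg ((hh1 (c - t)).monotone (neg_le_neg hy))
      · -- zero at zero
        intro t
        show -h (c - t) (-0) = 0
        rw [neg_zero, hh0, neg_zero]
      · exact huc.comp (continuous_const.sub continuous_id)
      · -- Hint
        intro t₁ t₂
        have h1 : IntervalIntegrable (fun x => -((fun s => h s (v s)) (c - x))) volume t₁ t₂ :=
          (refl_int hFi c t₁ t₂).neg
        have h2 : (fun s => -(h (c - s) (-(-(v (c - s)))))) =
            fun x => -((fun s => h s (v s)) (c - x)) := by
          funext s; rw [neg_neg]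
        exact h2 ▸ h1
      · exact fun t₁ t₂ => refl_int aguint c t₁ t₂
      · exact fun t₁ t₂ => refl_int wint c t₁ t₂
      · exact fun t₁ t₂ => refl_int aint c t₁ t₂
      · -- udiff reflected
        intro t₁ t₂
        simp only [neg_neg]
        have h1 := udiff (c - t₁) (c - t₂)
        have h2 : (∫ x in t₁..t₂, h (c - x) (v (c - x))) =
            ∫ x in (c - t₂)..(c - t₁), h x (v x) :=
          intervalIntegral.integral_comp_sub_left (fun s => h s (v s)) c
        have h3 : (∫ x in (c - t₂)..(c - t₁), h x (v x)) =
            -∫ x in (c - t₁)..(c - t₂), h x (v x) :=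
          intervalIntegral.integral_symm _ _
        show u (c - t₂) - u (c - t₁) = ∫ x in t₁..t₂, -(h (c - x) (v (c - x)))
        rw [intervalIntegral.integral_neg, h2, h3, neg_neg]
        exact h1
      · -- vdiff reflected
        intro t₁ t₂
        have h1 := vdiff (c - t₁) (c - t₂)
        have h2 : (∫ x in t₁..t₂, -(lam * (a (c - x) * g (u (c - x))) + α * w (c - x))) =
            ∫ x in (c - t₂)..(c - t₁), -(lam * (a x * g (u x)) + α * w x) :=
          intervalIntegral.integral_comp_sub_left
            (fun s => -(lam * (a s * g (u s)) + α * w s)) c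
        have h3 : (∫ x in (c - t₂)..(c - t₁), -(lam * (a x * g (u x)) + α * w x)) =
            -∫ x in (c - t₁)..(c - t₂), -(lam * (a x * g (u x)) + α * w x) :=
          intervalIntegral.integral_symm _ _
        show -(v (c - t₂)) - -(v (c - t₁)) =
          ∫ x in t₁..t₂, -(lam * (a (c - x) * g (u (c - x))) + α * w (c - x))
        rw [h2, h3, ← h1]
        ring
      · -- positivity of reflected a
        have hmp := (Measure.measurePreserving_sub_left volume c).quasiMeasurePreserving
        filter_upwards [hmp.ae hapos] with x hx hxm
        exact hx ⟨by simp only [hcdef]; linarith [hxm.2], by simp only [hcdef]; linarith [hxm.1]⟩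
      · -- A bound for reflected a
        intro x hx1 hx2
        have h1 := hAq (c - x - δ/4) (by linarith) (by linarith)
        rw [show c - x - δ/4 + δ/4 = c - x from by ring] at h1
        have h2 : (∫ s in x..(x + δ/4), a (c - s)) = ∫ s in (c - (x + δ/4))..(c - x), a s :=
          intervalIntegral.integral_comp_sub_left a c
        rw [h2, show c - (x + δ/4) = c - x - δ/4 from by ring]
        exact h1
      · -- superlinearity for the reflected system
        intro s hs t
        show -(h (c - t) (-(-(lam * A * g s)))) ≤ -(8/δ * s)
        rw [neg_neg]
        linarith [hsupP s hs (c - t)]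
      · -- C bound for the reflected system
        intro t y hy1 hy2
        show -(-(h (c - t) (-y))) ≤ C
        rw [neg_neg]
        have habs : |h (c - t) (-y)| ≤ C := by
          apply hCabs
          rw [abs_neg]
          exact abs_le.mpr ⟨hy1, hy2.trans hB0⟩
        linarith [le_abs_self (h (c - t) (-y))]
      · -- p ≤ c - t'
        simp only [hcdef]
        linarith [ht'pq.2]
      · -- c - t' + δ/2 ≤ q
        simp only [hcdef]
        linarith
      · -- value R at reflected maximum point
        show u (c - (c - t')) = R
        rw [show c - (c - t') = t' from by ring]
        exact hut'
      · -- v vanishes at reflected maximum point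
        show -(v (c - (c - t'))) = 0
        rw [show c - (c - t') = t' from by ring, hvt'0, neg_zero]
  -- dispatch on which interval contains t'
  obtain ⟨n, hn⟩ := Set.mem_iUnion.mp ht'mem.1
  rcases hn with hn | hn
  · refine main (σ n) (τ n) (hδle n) hn (hapos0 n) ?_
    intro x hx1 hx2
    exact le_trans (hAle n) (hAnle n x ⟨hx1, by linarith⟩)
  · refine main (σ n + T) (τ n + T) (by linarith [hδle n]) hn ?_ ?_
    · -- translated a.e. positivity
      have hqmp := (measurePreserving_add_right volume (-T)).quasiMeasurePreserving
      filter_upwards [hqmp.ae (hapos0 n)] with x hx hxm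
      have hxm' : x + -T ∈ Set.Icc (σ n) (τ n) := ⟨by linarith [hxm.1], by linarith [hxm.2]⟩
      have h1 := hx hxm'
      have ha : a x = a (x + -T) := by
        have h2 := haper (x + -T)
        rw [show x + -T + T = x from by ring] at h2
        exact h2
      rw [ha]
      exact h1
    · -- translated window bound
      intro x hx1 hx2
      have hfa : ∀ s : ℝ, a s = a (s - T) := by
        intro s
        have h2 := haper (s - T)
        rw [show s - T + T = s from by ring] at h2
        exact h2
      have h2 : (∫ s in x..(x + δ/4), a s) = ∫ s in x..(x + δ/4), a (s - T) :=
        intervalIntegral.integral_congr fun y _ => hfa y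
      rw [h2, intervalIntegral.integral_comp_sub_right a T]
      have h3 := hAnle n (x - T) ⟨by linarith, by linarith⟩
      have h4 : A ≤ φ (x - T) := le_trans (hAle n) h3
      rw [show x + δ/4 - T = x - T + δ/4 from by ring]
      exact h4
end
end

section
/- Let T > 0. Let h : ℝ × ℝ → ℝ be continuous and T-periodic in the first variable, and let g : [0,+∞) → [0,+∞) be continuous and satisfy (g*). Define g̲(s) = min_{ξ ∈ [s/2, s]} g(ξ) for s > 0. If for every K ∈ ℝ \ {0} one has lim_{s→+∞} sign(K) · h(t, K g(s))/s = +∞ uniformly in t ∈ ℝ, then for every K ∈ ℝ \ {0} one has lim_{s→+∞} sign(K) · h(t, K g̲(s))/s = +∞ uniformly in t ∈ ℝ. -/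
open MeasureTheory Set Filter

noncomputable section

/-- `g̲(s) = min_{ξ ∈ [s/2, s]} g ξ`. -/
def glow (g : ℝ → ℝ) (s : ℝ) : ℝ := sInf (g '' Set.Icc (s / 2) s)

theorem statement11
    (T : ℝ) (hT : 0 < T)
    (h : ℝ → ℝ → ℝ) (hhc : Continuous (Function.uncurry h))
    (hhper : ∀ t s : ℝ, h (t + T) s = h t s)
    (g : ℝ → ℝ) (hgc : ContinuousOn g (Set.Ici 0))
    (hg0 : g 0 = 0) (hgpos : ∀ s : ℝ, 0 < s → 0 < g s)
    (hinf : ∀ K : ℝ, K ≠ 0 → ∀ M : ℝ, ∀ᶠ s in Filter.atTop,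
      ∀ t : ℝ, M ≤ Real.sign K * (h t (K * g s) / s)) :
    ∀ K : ℝ, K ≠ 0 → ∀ M : ℝ, ∀ᶠ s in Filter.atTop,
      ∀ t : ℝ, M ≤ Real.sign K * (h t (K * glow g s) / s) := by
  intro K hK M
  obtain ⟨a, ha⟩ := Filter.eventually_atTop.mp (hinf K hK (2 * max M 0))
  filter_upwards [Filter.eventually_ge_atTop (max (2 * a) 1)] with s hs t
  have hs1 : (1 : ℝ) ≤ s := le_trans (le_max_right _ _) hs
  have hs0 : (0 : ℝ) < s := lt_of_lt_of_le one_pos hs1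
  have hsub : Set.Icc (s / 2) s ⊆ Set.Ici (0 : ℝ) := fun x hx =>
    le_trans (by linarith : (0:ℝ) ≤ s / 2) hx.1
  have hne : (Set.Icc (s / 2) s).Nonempty := ⟨s, by constructor <;> linarith⟩
  obtain ⟨ξ, hξmem, hξmin⟩ :=
    (isCompact_Icc : IsCompact (Set.Icc (s / 2) s)).exists_isMinOn hne (hgc.mono hsub)
  have hglow : glow g s = g ξ := by
    apply le_antisymm
    · exact csInf_le ⟨g ξ, fun y ⟨x, hx, hxy⟩ => hxy ▸ hξmin hx⟩ ⟨ξ, hξmem, rfl⟩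
    · exact le_csInf ⟨g ξ, ⟨ξ, hξmem, rfl⟩⟩ (fun y ⟨x, hx, hxy⟩ => hxy ▸ hξmin hx)
  rw [hglow]
  have hξa : a ≤ ξ := by
    have : 2 * a ≤ s := le_trans (le_max_left _ _) hs
    have := hξmem.1
    linarith
  have hξ0 : (0 : ℝ) < ξ := lt_of_lt_of_le (by linarith : (0:ℝ) < s / 2) hξmem.1
  have key := ha ξ hξa t
  rw [mul_div_assoc'] at key ⊢
  rw [le_div_iff₀ hξ0] at key
  rw [le_div_iff₀ hs0]
  have h1 : ξ ≥ s / 2 := hξmem.1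
  have h2 : max M 0 ≥ M := le_max_left _ _
  have h3 : max M 0 ≥ 0 := le_max_right _ _
  nlinarith [key, h1, h2, h3, hs0]
end
end
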